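/- arXiv:1808.02787 — 7 statements merged into one kernel-verified Lean document; each statement's English description precedes it below -/
import Mathlib

section
/- Let k ≥ 2 and n = (n_1, …, n_k) with each n_i ≥ 1, and let G_n be the complete k-partite graph with part sizes n. Then the number of acyclic orientations of G_n equals the sum, over all tuples m = (m_1, …, m_k) with 1 ≤ m_i ≤ n_i for every i, of s_m · ∏_{i=1}^k S(n_i, m_i), where s_m is the number of Hamiltonian paths (counted as vertex sequences, so a path and its reversal count as two) of the complete k-partite graph G_m with part sizes m, and S(a,b) is the Stirling number of the second kind. -/
open SimpleGraph

/-- An acyclic orientation of a simple graph: each edge gets exactly one direction,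
only edges are directed, and there is no directed cycle. -/
structure AcyclicOrientation {V : Type*} (G : SimpleGraph V) where
  dir : V → V → Prop
  dir_adj : ∀ u v, dir u v → G.Adj u v
  total : ∀ u v, G.Adj u v → (dir u v ↔ ¬ dir v u)
  acyclic : ∀ v, ¬ Relation.TransGen dir v v

/-- Number of Hamiltonian paths of `G`, counted as vertex sequences. -/
noncomputable def hamCount {V : Type*} (G : SimpleGraph V) : ℕ :=
  Nat.card {l : List V // l.Nodup ∧ (∀ v, v ∈ l) ∧ l.Chain' G.Adj}

/-- Stirling numbers of the second kind. -/
def stirling : ℕ → ℕ → ℕ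
  | 0, 0 => 1
  | 0, _ + 1 => 0
  | _ + 1, 0 => 0
  | n + 1, j + 1 => (j + 1) * stirling n (j + 1) + stirling n j

namespace AOP

/-- The conditions for a level function. -/
def Cond {ι : Type*} {π : ι → Type*} (r : (Σ i, π i) → ℕ) : Prop :=
  (∀ u v : Σ i, π i, r u = r v → u.1 = v.1) ∧
  (∀ u v : Σ i, π i, r v = r u + 1 → u.1 ≠ v.1) ∧
  (∀ (v : Σ i, π i) (j : ℕ), j < r v → ∃ u, r u = j)


theorem AO.ext' {V : Type*} {G : SimpleGraph V} {D D' : AcyclicOrientation G}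
    (h : D.dir = D'.dir) : D = D' := by cases D; cases D'; cases h; rfl

open Classical in
noncomputable def ht {α : Type*} [Fintype α] (dir : α → α → Prop) (wf : WellFounded dir) : α → ℕ :=
  wf.fix fun v ih => Finset.univ.sup fun u => if h : dir u v then ih u h + 1 else 0

open Classical in
theorem ht_eq {α : Type*} [Fintype α] (dir : α → α → Prop) (wf : WellFounded dir) (v : α) :
    ht dir wf v = Finset.univ.sup fun u => if h : dir u v then ht dir wf u + 1 else 0 :=
  wf.fix_eq _ v

variable {α : Type*} [Fintype α] {dir : α → α → Prop} {wf : WellFounded dir}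

theorem lt_ht_of_dir {u v : α} (h : dir u v) : ht dir wf u < ht dir wf v := by
  classical
  have := Finset.le_sup (f := fun u => if h : dir u v then ht dir wf u + 1 else 0)
    (Finset.mem_univ u)
  simp only [dif_pos h] at this
  rw [ht_eq dir wf v]
  exact lt_of_lt_of_le (Nat.lt_succ_self _) this

theorem ht_le {v : α} {c : ℕ} (h : ∀ u, dir u v → ht dir wf u + 1 ≤ c) : ht dir wf v ≤ c := by
  classical
  rw [ht_eq]
  refine Finset.sup_le fun u _ => ?_
  split
  · next hd => convert h u hd using 2
  · exact Nat.zero_le _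

theorem exists_dir_ht_eq {v : α} {j : ℕ} (h : ht dir wf v = j + 1) :
    ∃ u, dir u v ∧ ht dir wf u = j := by
  classical
  by_contra hc
  push_neg at hc
  have : ht dir wf v ≤ j := ht_le fun u hd => by
    have h1 : ht dir wf u < j + 1 := h ▸ lt_ht_of_dir hd
    have h2 := hc u hd
    omega
  omega

theorem ht_initial (v : α) : ∀ j, j < ht dir wf v → ∃ u, ht dir wf u = j := by
  induction v using WellFounded.induction wf with
  | _ v ih =>
    intro j hj
    cases hv : ht dir wf v with
    | zero => omega
    | succ t =>
      obtain ⟨u, hd, hu⟩ := exists_dir_ht_eq hv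
      rcases eq_or_lt_of_le (Nat.le_of_lt_succ (hv ▸ hj)) with h | h
      · exact ⟨u, by omega⟩
      · exact ih u hd j (by omega)

section LevelEquiv

variable {ι : Type*} {π : ι → Type*} [Fintype ι] [∀ i, Fintype (π i)]


theorem wfD (D : AcyclicOrientation (completeMultipartiteGraph π)) : WellFounded D.dir := by
  haveI : IsTrans (Σ i, π i) (Relation.TransGen D.dir) := ⟨fun _ _ _ => Relation.TransGen.trans⟩
  haveI : IsIrrefl (Σ i, π i) (Relation.TransGen D.dir) := ⟨fun v h => D.acyclic v h⟩
  exact Subrelation.wf (fun h => Relation.TransGen.single h)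
    (Finite.wellFounded_of_trans_of_irrefl _)

theorem dir_or (D : AcyclicOrientation (completeMultipartiteGraph π)) {u v : Σ i, π i}
    (h : u.1 ≠ v.1) : D.dir u v ∨ D.dir v u := by
  by_cases h2 : D.dir v u
  · exact Or.inr h2
  · exact Or.inl ((D.total u v h).mpr h2)

/-- The orientation associated to a level function. -/
def dirOf (r : (Σ i, π i) → ℕ) (hr : Cond r) :
    AcyclicOrientation (completeMultipartiteGraph π) where
  dir u v := u.1 ≠ v.1 ∧ r u < r v
  dir_adj u v h := h.1
  total u v hadj := by
    constructor
    · rintro ⟨h1, h2⟩ ⟨h3, h4⟩; omega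
    · intro hn
      refine ⟨hadj, ?_⟩
      have hne : r u ≠ r v := fun he => hadj (hr.1 u v he)
      rcases Nat.lt_or_ge (r u) (r v) with h | h
      · exact h
      · exact absurd ⟨Ne.symm hadj, by omega⟩ hn
  acyclic v hcyc := by
    have : ∀ a b, Relation.TransGen (fun u v => u.1 ≠ v.1 ∧ r u < r v) a b → r a < r b := by
      intro a b h
      induction h with
      | single h => exact h.2
      | tail _ h ih => exact lt_trans ih h.2
    exact absurd (this v v hcyc) (lt_irrefl _)

theorem cond_ht (D : AcyclicOrientation (completeMultipartiteGraph π)) :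
    Cond (ht D.dir (wfD D)) := by
  set h := ht D.dir (wfD D) with hh
  have key1 : ∀ u v : Σ i, π i, h u = h v → u.1 = v.1 := by
    intro u v he
    by_contra hne
    rcases dir_or D hne with hd | hd
    · exact absurd he (Nat.ne_of_lt (lt_ht_of_dir hd))
    · exact absurd he.symm (Nat.ne_of_lt (lt_ht_of_dir hd))
  refine ⟨key1, ?_, fun v j hj => ht_initial v j hj⟩
  intro u v he heq
  obtain ⟨w, hd, hw⟩ := exists_dir_ht_eq he
  have h1 : w.1 = u.1 := key1 w u hw
  have h2 : w.1 ≠ v.1 := D.dir_adj w v hd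
  exact h2 (h1.trans heq)

/-- Part A: acyclic orientations of a complete multipartite graph biject with
level functions. -/
noncomputable def levelEquiv :
    AcyclicOrientation (completeMultipartiteGraph π) ≃ {r : (Σ i, π i) → ℕ // Cond r} where
  toFun D := ⟨ht D.dir (wfD D), cond_ht D⟩
  invFun r := dirOf r.1 r.2
  left_inv D := by
    apply AO.ext'
    funext u v
    show (u.1 ≠ v.1 ∧ ht D.dir (wfD D) u < ht D.dir (wfD D) v) = D.dir u v
    apply propext
    constructor
    · rintro ⟨h1, h2⟩
      rcases dir_or D h1 with hd | hd
      · exact hd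
      · exact absurd h2 (not_lt_of_gt (lt_ht_of_dir hd))
    · intro hd
      exact ⟨D.dir_adj u v hd, lt_ht_of_dir hd⟩
  right_inv r := by
    obtain ⟨r, hr⟩ := r
    apply Subtype.ext
    funext v
    show ht (dirOf r hr).dir (wfD _) v = r v
    induction v using WellFounded.induction (wfD (dirOf r hr)) with
    | _ v ih =>
      refine le_antisymm (ht_le fun u hd => ?_) ?_
      · have := ih u hd
        have h2 : r u < r v := hd.2
        omega
      · cases hrv : r v with
        | zero => exact Nat.zero_le _
        | succ j =>
          obtain ⟨u, hu⟩ := hr.2.2 v j (by omega)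
          have hne : u.1 ≠ v.1 := hr.2.1 u v (by omega)
          have hd : (dirOf r hr).dir u v := ⟨hne, by omega⟩
          have := lt_ht_of_dir (wf := wfD (dirOf r hr)) hd
          have := ih u hd
          omega

end LevelEquiv



theorem card_subtype_add {X : Type*} [Finite X] (P Q : X → Prop) :
    Nat.card {x // P x} = Nat.card {x // P x ∧ Q x} + Nat.card {x // P x ∧ ¬ Q x} := by
  classical
  rw [← Nat.card_sum]
  apply Nat.card_congr
  exact (((Equiv.subtypeSubtypeEquivSubtypeInter P Q).symm.sumCongr
    (Equiv.subtypeSubtypeEquivSubtypeInter P (fun x => ¬ Q x)).symm).trans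
    (Equiv.sumCompl _)).symm

/-- Subtype of a product where the predicate only involves the second factor. -/
def prodSubtypeEquiv {A B : Type*} (P : B → Prop) :
    {p : A × B // P p.2} ≃ A × {b // P b} where
  toFun p := (p.1.1, ⟨p.1.2, p.2⟩)
  invFun p := ⟨(p.1, p.2.1), p.2.2⟩
  left_inv p := rfl
  right_inv p := rfl

theorem card_surjections (n m : ℕ) :
    Nat.card {g : Fin n → Fin m // Function.Surjective g} = m.factorial * stirling n m := by
  induction n generalizing m with
  | zero =>
    match m with
    | 0 =>
      haveI : Unique {g : Fin 0 → Fin 0 // Function.Surjective g} :=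
        ⟨⟨⟨Fin.elim0, fun x => x.elim0⟩⟩, fun a => Subtype.ext (funext fun x => x.elim0)⟩
      simp [stirling, Nat.card_unique]
    | m + 1 =>
      haveI : IsEmpty {g : Fin 0 → Fin (m + 1) // Function.Surjective g} := by
        refine ⟨fun g => ?_⟩
        obtain ⟨x, _⟩ := g.2 0
        exact x.elim0
      simp [stirling, Nat.card_of_isEmpty]
  | succ n ih =>
    match m with
    | 0 =>
      haveI : IsEmpty {g : Fin (n + 1) → Fin 0 // Function.Surjective g} := by
        refine ⟨fun g => (g.1 0).elim0⟩
      simp [stirling, Nat.card_of_isEmpty]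
    | m + 1 =>
      classical
      -- transfer along cons equivalence
      have e0 : {g : Fin (n + 1) → Fin (m + 1) // Function.Surjective g} ≃
          {p : Fin (m + 1) × (Fin n → Fin (m + 1)) //
            Function.Surjective (Fin.cons p.1 p.2 : Fin (n + 1) → Fin (m + 1))} :=
        ((Fin.consEquiv (fun _ : Fin (n + 1) => Fin (m + 1))).subtypeEquiv
          (fun p => Iff.rfl)).symm
      rw [Nat.card_congr e0]
      rw [card_subtype_add _ (fun p => Function.Surjective p.2)]
      have h1 : Nat.card {p : Fin (m + 1) × (Fin n → Fin (m + 1)) //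
            Function.Surjective (Fin.cons p.1 p.2 : Fin (n + 1) → Fin (m + 1)) ∧
            Function.Surjective p.2} =
          (m + 1) * Nat.card {h : Fin n → Fin (m + 1) // Function.Surjective h} := by
        have e : {p : Fin (m + 1) × (Fin n → Fin (m + 1)) //
              Function.Surjective (Fin.cons p.1 p.2 : Fin (n + 1) → Fin (m + 1)) ∧
              Function.Surjective p.2} ≃
            Fin (m + 1) × {h : Fin n → Fin (m + 1) // Function.Surjective h} := by
          refine (Equiv.subtypeEquivRight ?_).trans (prodSubtypeEquiv _)
          rintro ⟨c, h⟩
          constructor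
          · exact fun hp => hp.2
          · intro hs
            refine ⟨fun y => ?_, hs⟩
            obtain ⟨x, hx⟩ := hs y
            exact ⟨x.succ, by simpa using hx⟩
        rw [Nat.card_congr e, Nat.card_prod, Nat.card_eq_fintype_card (α := Fin (m + 1)),
          Fintype.card_fin]
      have h2 : Nat.card {p : Fin (m + 1) × (Fin n → Fin (m + 1)) //
            Function.Surjective (Fin.cons p.1 p.2 : Fin (n + 1) → Fin (m + 1)) ∧
            ¬ Function.Surjective p.2} =
          (m + 1) * Nat.card {h : Fin n → Fin m // Function.Surjective h} := by
        have e1 : {p : Fin (m + 1) × (Fin n → Fin (m + 1)) //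
              Function.Surjective (Fin.cons p.1 p.2 : Fin (n + 1) → Fin (m + 1)) ∧
              ¬ Function.Surjective p.2} ≃
            {p : Fin (m + 1) × (Fin n → Fin (m + 1)) //
              (∀ x, p.2 x ≠ p.1) ∧ (∀ y, y ≠ p.1 → ∃ x, p.2 x = y)} := by
          refine Equiv.subtypeEquivRight ?_
          rintro ⟨c, h⟩
          constructor
          · rintro ⟨hA, hB⟩
            constructor
            · intro x hx
              refine absurd ?_ hB
              intro y
              obtain ⟨z, hz⟩ := hA y
              induction z using Fin.cases with
              | zero => exact ⟨x, by rw [hx]; simpa using hz⟩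
              | succ w => exact ⟨w, by simpa using hz⟩
            · intro y hy
              obtain ⟨z, hz⟩ := hA y
              induction z using Fin.cases with
              | zero => exact absurd (by simpa using hz) (Ne.symm hy)
              | succ w => exact ⟨w, by simpa using hz⟩
          · rintro ⟨hne, hcov⟩
            constructor
            · intro y
              by_cases hy : y = c
              · exact ⟨0, by simp [hy]⟩
              · obtain ⟨x, hx⟩ := hcov y hy
                exact ⟨x.succ, by simpa using hx⟩
            · intro hs
              obtain ⟨x, hx⟩ := hs c
              exact hne x hx
        have e2 : {p : Fin (m + 1) × (Fin n → Fin (m + 1)) //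
              (∀ x, p.2 x ≠ p.1) ∧ (∀ y, y ≠ p.1 → ∃ x, p.2 x = y)} ≃
            Fin (m + 1) × {h : Fin n → Fin m // Function.Surjective h} :=
        { toFun := fun p => (p.1.1, ⟨fun x => (finSuccAboveEquiv p.1.1).symm ⟨p.1.2 x, p.2.1 x⟩, by
            intro b
            obtain ⟨x, hx⟩ := p.2.2 ((finSuccAboveEquiv p.1.1) b).1
              ((finSuccAboveEquiv p.1.1) b).2
            refine ⟨x, ?_⟩
            have : (⟨p.1.2 x, p.2.1 x⟩ : {y // y ≠ p.1.1}) = (finSuccAboveEquiv p.1.1) b :=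
              Subtype.ext hx
            exact (Equiv.symm_apply_eq _).mpr this⟩)
          invFun := fun q => ⟨(q.1, fun x => ((finSuccAboveEquiv q.1) (q.2.1 x)).1),
            fun x => ((finSuccAboveEquiv q.1) (q.2.1 x)).2,
            by
              intro y hy
              obtain ⟨b, hb⟩ := q.2.2 ((finSuccAboveEquiv q.1).symm ⟨y, hy⟩)
              refine ⟨b, ?_⟩
              show ((finSuccAboveEquiv q.1) (q.2.1 b)).1 = y
              rw [hb, Equiv.apply_symm_apply]⟩
          left_inv := fun p => by
            obtain ⟨⟨c, h⟩, hp⟩ := p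
            apply Subtype.ext
            refine Prod.ext rfl ?_
            funext x
            exact congrArg Subtype.val (Equiv.apply_symm_apply (finSuccAboveEquiv c) _)
          right_inv := fun q => by
            obtain ⟨c, ⟨h, hs⟩⟩ := q
            refine Prod.ext rfl ?_
            apply Subtype.ext
            funext x
            show (finSuccAboveEquiv c).symm _ = h x
            have : (⟨((finSuccAboveEquiv c) (h x)).1, _⟩ : {y // y ≠ c}) =
                (finSuccAboveEquiv c) (h x) := Subtype.ext rfl
            rw [this, Equiv.symm_apply_apply] }
        rw [Nat.card_congr (e1.trans e2), Nat.card_prod,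
          Nat.card_eq_fintype_card (α := Fin (m + 1)), Fintype.card_fin]
      rw [h1, h2, ih (m + 1), ih m]
      simp only [stirling, Nat.factorial_succ]
      ring



theorem nat_card_fiberwise {X A : Type*} [Fintype X] [DecidableEq A] (f : X → A)
    (s : Finset A) (h : ∀ x, f x ∈ s) :
    Nat.card X = ∑ a ∈ s, Nat.card {x // f x = a} := by
  classical
  rw [Nat.card_eq_fintype_card, ← Finset.card_univ,
    Finset.card_eq_sum_card_fiberwise (fun x _ => h x)]
  refine Finset.sum_congr rfl fun a _ => ?_
  rw [Nat.card_eq_fintype_card, Fintype.card_subtype]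

section PartC

variable {k : ℕ} (m : Fin k → ℕ)

/-- Pattern predicate: consecutive entries distinct, and prescribed multiplicities. -/
def PatP (q : Fin (∑ i, m i) → Fin k) : Prop :=
  (∀ (j : ℕ) (h1 : j < ∑ i, m i) (h2 : j + 1 < ∑ i, m i), q ⟨j, h1⟩ ≠ q ⟨j + 1, h2⟩) ∧
  ∀ i, (Finset.univ.filter fun j => q j = i).card = m i

def sigmaSub (i : Fin k) : {v : Σ i, Fin (m i) // v.1 = i} ≃ Fin (m i) where
  toFun v := Fin.cast (congrArg m v.2) v.1.2
  invFun b := ⟨⟨i, b⟩, rfl⟩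
  left_inv v := by
    obtain ⟨⟨i', b⟩, h⟩ := v
    dsimp at h
    subst h
    rfl
  right_inv b := rfl

theorem sigmaSub_apply (i : Fin k) (v : {v : Σ i, Fin (m i) // v.1 = i}) :
    sigmaSub m i v = Fin.cast (congrArg m v.2) v.1.2 := rfl

theorem sigma_cast_eq (v : Σ i, Fin (m i)) (i : Fin k) (h : v.1 = i) :
    (⟨i, Fin.cast (congrArg m h) v.2⟩ : Σ i, Fin (m i)) = v := by
  obtain ⟨a, b⟩ := v
  dsimp at h
  subst h
  rfl

variable (q : Fin (∑ i, m i) → Fin k)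

/-- The canonical list built from a pattern `q` and labellings `f`. -/
def bl (f : ∀ i, {j : Fin (∑ i, m i) // q j = i} ≃ Fin (m i)) : List ((i : Fin k) × Fin (m i)) :=
  List.ofFn fun j => ⟨q j, f (q j) ⟨j, rfl⟩⟩

theorem bl_length (f : ∀ i, {j : Fin (∑ i, m i) // q j = i} ≃ Fin (m i)) :
    (bl m q f).length = ∑ i, m i := List.length_ofFn

theorem key2 (f : ∀ i, {j : Fin (∑ i, m i) // q j = i} ≃ Fin (m i))
    (j : Fin (∑ i, m i)) (i : Fin k) (h : q j = i) :
    (⟨q j, f (q j) ⟨j, rfl⟩⟩ : Σ i, Fin (m i)) = ⟨i, f i ⟨j, h⟩⟩ := by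
  subst h
  rfl

theorem bl_get (f : ∀ i, {j : Fin (∑ i, m i) // q j = i} ≃ Fin (m i))
    (j : Fin ((bl m q f).length)) :
    (bl m q f).get j =
      ⟨q (Fin.cast (bl_length m q f) j),
        f (q (Fin.cast (bl_length m q f) j)) ⟨Fin.cast (bl_length m q f) j, rfl⟩⟩ :=
  List.get_ofFn _ _

theorem bl_nodup (f : ∀ i, {j : Fin (∑ i, m i) // q j = i} ≃ Fin (m i)) :
    (bl m q f).Nodup := by
  refine List.nodup_ofFn.mpr ?_
  have h : Function.LeftInverse
      (fun v : (i : Fin k) × Fin (m i) => (((f v.1).symm v.2 : {j // q j = v.1}) : Fin (∑ i, m i)))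
      (fun j : Fin (∑ i, m i) => (⟨q j, f (q j) ⟨j, rfl⟩⟩ : (i : Fin k) × Fin (m i))) := by
    intro j
    simp
  exact h.injective

theorem bl_complete (f : ∀ i, {j : Fin (∑ i, m i) // q j = i} ≃ Fin (m i))
    (v : (i : Fin k) × Fin (m i)) : v ∈ bl m q f := by
  obtain ⟨i, b⟩ := v
  rw [bl, List.mem_ofFn]
  refine ⟨((f i).symm b : {j // q j = i}), ?_⟩
  show (⟨q ((f i).symm b : {j // q j = i}), _⟩ : (i : Fin k) × Fin (m i)) = _
  rw [key2 m q f (((f i).symm b : {j // q j = i}) : Fin (∑ i, m i)) i ((f i).symm b).2]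
  exact congrArg (Sigma.mk i) (by rw [Subtype.coe_eta]; exact Equiv.apply_symm_apply (f i) b)

theorem bl_chain' (hq : ∀ (j : ℕ) (h1 : j < ∑ i, m i) (h2 : j + 1 < ∑ i, m i),
      q ⟨j, h1⟩ ≠ q ⟨j + 1, h2⟩)
    (f : ∀ i, {j : Fin (∑ i, m i) // q j = i} ≃ Fin (m i)) :
    (bl m q f).Chain' (completeMultipartiteGraph fun i : Fin k => Fin (m i)).Adj := by
  refine List.isChain_iff_getElem.mpr ?_
  intro j hj
  have hl := bl_length m q f
  rw [hl] at hj
  simp only [bl, List.getElem_ofFn]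
  exact hq j (by omega) (by omega)

theorem bl_inj (f f' : ∀ i, {j : Fin (∑ i, m i) // q j = i} ≃ Fin (m i))
    (h : bl m q f = bl m q f') : f = f' := by
  have h2 : (fun j : Fin (∑ i, m i) => (⟨q j, f (q j) ⟨j, rfl⟩⟩ : (i : Fin k) × Fin (m i))) =
      fun j => ⟨q j, f' (q j) ⟨j, rfl⟩⟩ := List.ofFn_inj.mp h
  funext i
  apply Equiv.ext
  rintro ⟨j, hj⟩
  subst hj
  have h3 := congrFun h2 j
  exact @sigma_mk_injective (Fin k) (fun i => Fin (m i)) (q j) _ _ h3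

section Converse

variable (l : List ((i : Fin k) × Fin (m i))) (hlen : l.length = ∑ i, m i)

/-- The pattern of a Hamiltonian list. -/
def lpat : Fin (∑ i, m i) → Fin k := fun j => (l.get (Fin.cast hlen.symm j)).1

variable (hnd : l.Nodup) (hcpl : ∀ v, v ∈ l)

noncomputable def lequiv : Fin (∑ i, m i) ≃ (i : Fin k) × Fin (m i) :=
  Equiv.ofBijective (fun j => l.get (Fin.cast hlen.symm j))
    ⟨fun a b hab => by
        have h2 := List.nodup_iff_injective_get.mp hnd hab
        have h3 := congrArg Fin.val h2
        exact Fin.ext h3,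
      fun v => by
        obtain ⟨j, hj⟩ := List.mem_iff_get.mp (hcpl v)
        exact ⟨Fin.cast hlen j, hj⟩⟩

noncomputable def lf (i : Fin k) : {j : Fin (∑ i, m i) // lpat m l hlen j = i} ≃ Fin (m i) :=
  (Equiv.subtypeEquiv (lequiv m l hlen hnd hcpl) (fun j => Iff.rfl)).trans (sigmaSub m i)

theorem lf_spec (j : Fin (∑ i, m i)) :
    (⟨lpat m l hlen j, lf m l hlen hnd hcpl (lpat m l hlen j) ⟨j, rfl⟩⟩ :
      (i : Fin k) × Fin (m i)) = l.get (Fin.cast hlen.symm j) := by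
  exact sigma_cast_eq m (l.get (Fin.cast hlen.symm j)) (lpat m l hlen j) rfl

include hnd hcpl in
theorem lpat_patP (hch : l.Chain' (completeMultipartiteGraph fun i : Fin k => Fin (m i)).Adj) :
    PatP m (lpat m l hlen) := by
  classical
  constructor
  · intro j h1 h2
    exact List.isChain_iff_getElem.mp hch j (by omega)
  · intro i
    calc (Finset.univ.filter fun j => lpat m l hlen j = i).card
        = Fintype.card {j : Fin (∑ i, m i) // lpat m l hlen j = i} :=
          (Fintype.card_subtype _).symm
      _ = Fintype.card (Fin (m i)) := Fintype.card_congr (lf m l hlen hnd hcpl i)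
      _ = m i := Fintype.card_fin _

theorem bl_lf : bl m (lpat m l hlen) (fun i => lf m l hlen hnd hcpl i) = l := by
  apply List.ext_get (by rw [bl_length]; exact hlen.symm)
  intro jj h1 h2
  rw [bl_get]
  exact lf_spec m l hlen hnd hcpl _

end Converse

theorem bl_lpat (f : ∀ i, {j : Fin (∑ i, m i) // q j = i} ≃ Fin (m i)) :
    lpat m (bl m q f) (bl_length m q f) = q := by
  funext j
  show ((bl m q f).get _).1 = q j
  rw [bl_get]
  rfl

theorem hamCount_eq_pat :
    hamCount (completeMultipartiteGraph fun i : Fin k => Fin (m i)) =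
      Nat.card {q : Fin (∑ i, m i) → Fin k // PatP m q} * ∏ i, (m i).factorial := by
  classical
  have hV : Fintype.card ((i : Fin k) × Fin (m i)) = ∑ i, m i := by simp
  set X := {l : List ((i : Fin k) × Fin (m i)) // l.Nodup ∧ (∀ v, v ∈ l) ∧
    l.Chain' (completeMultipartiteGraph fun i : Fin k => Fin (m i)).Adj} with hX
  have hlen : ∀ x : X, x.1.length = ∑ i, m i := fun x => by
    have h1 : x.1.toFinset = Finset.univ :=
      Finset.eq_univ_iff_forall.mpr fun v => List.mem_toFinset.mpr (x.2.2.1 v)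
    have h2 := List.toFinset_card_of_nodup x.2.1
    rw [h1, Finset.card_univ, hV] at h2
    omega
  haveI : Finite X := by
    have hfin := List.finite_length_le ((i : Fin k) × Fin (m i)) (∑ i, m i)
    haveI := hfin.to_subtype
    exact Finite.of_injective
      (fun x : X => (⟨x.1, le_of_eq (hlen x)⟩ :
        {l : List ((i : Fin k) × Fin (m i)) | l.length ≤ ∑ i, m i}))
      (fun a b hab => by
        have h2 := congrArg Subtype.val hab
        exact Subtype.ext h2)
  haveI : Fintype X := Fintype.ofFinite X
  haveI : Fintype {q : Fin (∑ i, m i) → Fin k // PatP m q} := Fintype.ofFinite _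
  set patOf : X → {q : Fin (∑ i, m i) → Fin k // PatP m q} := fun x =>
    ⟨lpat m x.1 (hlen x), lpat_patP m x.1 (hlen x) x.2.1 x.2.2.1 x.2.2.2⟩ with hpatOf
  have step1 := nat_card_fiberwise patOf Finset.univ (fun x => Finset.mem_univ _)
  have fibercard : ∀ q : {q : Fin (∑ i, m i) → Fin k // PatP m q},
      Nat.card {x : X // patOf x = q} = ∏ i, (m i).factorial := by
    intro q
    have hbij : Function.Bijective (fun f : (∀ i, {j : Fin (∑ i, m i) // q.1 j = i} ≃ Fin (m i)) =>
        (⟨⟨bl m q.1 f, bl_nodup m q.1 f, bl_complete m q.1 f, bl_chain' m q.1 q.2.1 f⟩,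
          Subtype.ext (bl_lpat m q.1 f)⟩ : {x : X // patOf x = q})) := by
      constructor
      · intro f f' hff
        exact bl_inj m q.1 f f' (congrArg (fun y => y.1.1) hff)
      · rintro ⟨⟨l, hnd, hcpl, hch⟩, hfix⟩
        obtain ⟨q1, hq1⟩ := q
        have hq : lpat m l (hlen ⟨l, hnd, hcpl, hch⟩) = q1 := congrArg Subtype.val hfix
        subst hq
        refine ⟨fun i => lf m l (hlen ⟨l, hnd, hcpl, hch⟩) hnd hcpl i, ?_⟩
        apply Subtype.ext
        apply Subtype.ext
        exact bl_lf m l (hlen ⟨l, hnd, hcpl, hch⟩) hnd hcpl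
    have hcnt := Nat.card_eq_of_bijective _ hbij
    rw [← hcnt, Nat.card_pi]
    refine Finset.prod_congr rfl fun i _ => ?_
    have hcard : Fintype.card {j : Fin (∑ i, m i) // q.1 j = i} = m i := by
      rw [Fintype.card_subtype]
      exact q.2.2 i
    rw [Nat.card_eq_fintype_card,
      Fintype.card_equiv (Fintype.equivFinOfCardEq hcard), hcard]
  have hham : hamCount (completeMultipartiteGraph fun i : Fin k => Fin (m i)) = Nat.card X := rfl
  rw [hham, step1, Finset.sum_congr rfl (fun q _ => fibercard q), Finset.sum_const, smul_eq_mul,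
    Finset.card_univ, Nat.card_eq_fintype_card]

end PartC




section PartB

variable {k : ℕ} {n : Fin k → ℕ}

/-- The signature of a level function: number of distinct levels in each part. -/
def sig (r : (Σ i : Fin k, Fin (n i)) → ℕ) : Fin k → ℕ :=
  fun i => (Finset.image (fun a => r ⟨i, a⟩) Finset.univ).card

theorem mem_iff_lt_card_of_dc (E : Finset ℕ) (hdc : ∀ x ∈ E, ∀ y < x, y ∈ E) (x : ℕ) :
    x ∈ E ↔ x < E.card := by
  constructor
  · intro hx
    have hsub : Finset.range (x + 1) ⊆ E := by
      intro y hy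
      rw [Finset.mem_range] at hy
      rcases Nat.lt_succ_iff_lt_or_eq.mp hy with h | h
      · exact hdc x hx y h
      · exact h ▸ hx
    have := Finset.card_le_card hsub
    rw [Finset.card_range] at this
    omega
  · intro hx
    by_contra hxE
    have hsub : E ⊆ Finset.range x := by
      intro y hy
      rw [Finset.mem_range]
      rcases Nat.lt_trichotomy y x with h | h | h
      · exact h
      · exact absurd (h ▸ hy) hxE
      · exact absurd (hdc y hy x h) hxE
    have := Finset.card_le_card hsub
    rw [Finset.card_range] at this
    omega

theorem cond_image_dc (r : (Σ i : Fin k, Fin (n i)) → ℕ) (hr : Cond r) :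
    ∀ x ∈ Finset.image r Finset.univ, ∀ y < x, y ∈ Finset.image r Finset.univ := by
  intro x hx y hy
  rw [Finset.mem_image] at hx ⊢
  obtain ⟨v, _, rfl⟩ := hx
  obtain ⟨u, hu⟩ := hr.2.2 v y hy
  exact ⟨u, Finset.mem_univ u, hu⟩

theorem cond_mem_image_iff (r : (Σ i : Fin k, Fin (n i)) → ℕ) (hr : Cond r) (x : ℕ) :
    x ∈ Finset.image r Finset.univ ↔ x < (Finset.image r Finset.univ).card :=
  mem_iff_lt_card_of_dc _ (cond_image_dc r hr) x

theorem cond_card_image (r : (Σ i : Fin k, Fin (n i)) → ℕ) (hr : Cond r) :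
    (Finset.image r Finset.univ).card = ∑ i, sig r i := by
  classical
  have hE : Finset.image r Finset.univ =
      Finset.univ.biUnion fun i : Fin k =>
        Finset.image (fun a : Fin (n i) => r ⟨i, a⟩) Finset.univ := by
    ext x
    simp only [Finset.mem_image, Finset.mem_biUnion, Finset.mem_univ, true_and]
    constructor
    · rintro ⟨⟨i, a⟩, rfl⟩
      exact ⟨i, a, rfl⟩
    · rintro ⟨i, a, rfl⟩
      exact ⟨⟨i, a⟩, rfl⟩
  rw [hE, Finset.card_biUnion]
  · rfl
  · intro i _ i' _ hii
    rw [Function.onFun, Finset.disjoint_left]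
    intro x hx hx'
    rw [Finset.mem_image] at hx hx'
    obtain ⟨a, _, ha⟩ := hx
    obtain ⟨a', _, ha'⟩ := hx'
    exact hii (hr.1 ⟨i, a⟩ ⟨i', a'⟩ (ha.trans ha'.symm))

theorem cond_lt_sum_sig (r : (Σ i : Fin k, Fin (n i)) → ℕ) (hr : Cond r)
    (v : Σ i : Fin k, Fin (n i)) : r v < ∑ i, sig r i := by
  rw [← cond_card_image r hr, ← cond_mem_image_iff r hr]
  exact Finset.mem_image.mpr ⟨v, Finset.mem_univ v, rfl⟩

theorem cond_lt_card (r : (Σ i : Fin k, Fin (n i)) → ℕ) (hr : Cond r)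
    (v : Σ i : Fin k, Fin (n i)) : r v < Fintype.card (Σ i : Fin k, Fin (n i)) := by
  have h1 := cond_lt_sum_sig r hr v
  have h2 : ∑ i, sig r i ≤ Fintype.card (Σ i : Fin k, Fin (n i)) := by
    rw [← cond_card_image r hr]
    calc (Finset.image r Finset.univ).card ≤ Finset.univ.card := Finset.card_image_le
      _ = _ := Finset.card_univ
  omega

instance finite_cond : Finite {r : (Σ i : Fin k, Fin (n i)) → ℕ // Cond r} := by
  refine Finite.of_injective (fun x => fun v =>
    (⟨x.1 v, cond_lt_card x.1 x.2 v⟩ : Fin (Fintype.card (Σ i : Fin k, Fin (n i))))) ?_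
  intro a b hab
  apply Subtype.ext
  funext v
  have := congrFun hab v
  exact congrArg Fin.val this

section Psi

variable {k : ℕ} {n : Fin k → ℕ} (m : Fin k → ℕ) (q : Fin (∑ i, m i) → Fin k) (hq : PatP m q)
  (g : ∀ i, Fin (n i) → Fin (m i))

def Sfin (i : Fin k) : Finset (Fin (∑ i, m i)) := Finset.univ.filter fun j => q j = i

/-- The level function built from a pattern and a family of surjections. -/
def psi : (Σ i : Fin k, Fin (n i)) → ℕ := fun v =>
  (((Sfin m q v.1).orderIsoOfFin (hq.2 v.1) (g v.1 v.2) :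
    {x // x ∈ Sfin m q v.1}) : Fin (∑ i, m i)).val

theorem psi_lt (v : Σ i : Fin k, Fin (n i)) : psi m q hq g v < ∑ i, m i :=
  (((Sfin m q v.1).orderIsoOfFin (hq.2 v.1) (g v.1 v.2) :
    {x // x ∈ Sfin m q v.1}) : Fin (∑ i, m i)).isLt

theorem q_psi (v : Σ i : Fin k, Fin (n i)) (h : psi m q hq g v < ∑ i, m i) :
    q ⟨psi m q hq g v, h⟩ = v.1 := by
  have hm := (((Sfin m q v.1).orderIsoOfFin (hq.2 v.1)) (g v.1 v.2)).2
  simp only [Sfin, Finset.mem_filter] at hm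
  have he : (⟨psi m q hq g v, h⟩ : Fin (∑ i, m i)) =
      (((Sfin m q v.1).orderIsoOfFin (hq.2 v.1)) (g v.1 v.2) : Fin (∑ i, m i)) :=
    Fin.ext rfl
  rw [he]
  exact hm.2

theorem psi_level_surj (hg : ∀ i, Function.Surjective (g i)) (j : Fin (∑ i, m i)) :
    ∃ v, psi m q hq g v = j.val := by
  have hj : j ∈ Sfin m q (q j) := Finset.mem_filter.mpr ⟨Finset.mem_univ _, rfl⟩
  obtain ⟨b, hb⟩ := ((Sfin m q (q j)).orderIsoOfFin (hq.2 (q j))).surjective ⟨j, hj⟩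
  obtain ⟨a, ha⟩ := hg (q j) b
  refine ⟨⟨q j, a⟩, ?_⟩
  show (((Sfin m q (q j)).orderIsoOfFin (hq.2 (q j)) (g (q j) a)) : Fin (∑ i, m i)).val = j.val
  rw [ha, hb]

theorem cond_psi (hg : ∀ i, Function.Surjective (g i)) : Cond (psi m q hq g) := by
  refine ⟨?_, ?_, ?_⟩
  · intro u v h
    have h1 := q_psi m q hq g u (psi_lt m q hq g u)
    have h2 := q_psi m q hq g v (psi_lt m q hq g v)
    have h3 : (⟨psi m q hq g u, psi_lt m q hq g u⟩ : Fin (∑ i, m i)) =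
        ⟨psi m q hq g v, psi_lt m q hq g v⟩ := Fin.ext h
    rw [← h1, ← h2, h3]
  · intro u v h
    have h2 : psi m q hq g u + 1 < ∑ i, m i := by
      have := psi_lt m q hq g v
      omega
    have h4 := hq.1 (psi m q hq g u) (psi_lt m q hq g u) h2
    have h1 := q_psi m q hq g u (psi_lt m q hq g u)
    have h5 := q_psi m q hq g v (psi_lt m q hq g v)
    have h6 : (⟨psi m q hq g u + 1, h2⟩ : Fin (∑ i, m i)) =
        ⟨psi m q hq g v, psi_lt m q hq g v⟩ := Fin.ext h.symm
    rw [← h1, ← h5, ← h6]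
    exact h4
  · intro v j hj
    have hjT : j < ∑ i, m i := lt_trans hj (psi_lt m q hq g v)
    obtain ⟨u, hu⟩ := psi_level_surj m q hq g hg ⟨j, hjT⟩
    exact ⟨u, hu⟩

theorem sig_psi (hg : ∀ i, Function.Surjective (g i)) : sig (psi m q hq g) = m := by
  funext i
  show (Finset.image (fun a => psi m q hq g ⟨i, a⟩) Finset.univ).card = m i
  have him : Finset.image (fun a => psi m q hq g ⟨i, a⟩) Finset.univ
      = Finset.image Fin.val (Sfin m q i) := by
    ext x
    rw [Finset.mem_image, Finset.mem_image]
    constructor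
    · rintro ⟨a, -, rfl⟩
      exact ⟨(((Sfin m q i).orderIsoOfFin (hq.2 i)) (g i a) : Fin (∑ i, m i)),
        (((Sfin m q i).orderIsoOfFin (hq.2 i)) (g i a)).2, rfl⟩
    · rintro ⟨jf, hjf, rfl⟩
      obtain ⟨b, hb⟩ := ((Sfin m q i).orderIsoOfFin (hq.2 i)).surjective ⟨jf, hjf⟩
      obtain ⟨a, ha⟩ := hg i b
      refine ⟨a, Finset.mem_univ _, ?_⟩
      show (((Sfin m q i).orderIsoOfFin (hq.2 i) (g i a)) : Fin (∑ i, m i)).val = jf.val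
      rw [ha, hb]
  rw [him, Finset.card_image_of_injective _ Fin.val_injective]
  exact hq.2 i

variable (r : (Σ i : Fin k, Fin (n i)) → ℕ)

def gdef (hPat : PatP m q) (hrlt : ∀ v, r v < ∑ i, m i)
    (hrq : ∀ (v) (h : r v < ∑ i, m i), q ⟨r v, h⟩ = v.1) : ∀ i, Fin (n i) → Fin (m i) :=
  fun i a => ((Sfin m q i).orderIsoOfFin (hPat.2 i)).symm
    ⟨⟨r ⟨i, a⟩, hrlt ⟨i, a⟩⟩, by
      simp only [Sfin, Finset.mem_filter]
      exact ⟨Finset.mem_univ _, hrq ⟨i, a⟩ (hrlt _)⟩⟩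

theorem gdef_surj (hPat : PatP m q) (hrlt : ∀ v, r v < ∑ i, m i)
    (hrq : ∀ (v) (h : r v < ∑ i, m i), q ⟨r v, h⟩ = v.1)
    (hlev : ∀ j : Fin (∑ i, m i), ∃ v, r v = j.val) (i : Fin k) :
    Function.Surjective (gdef m q r hPat hrlt hrq i) := by
  intro b
  set jfull := ((Sfin m q i).orderIsoOfFin (hPat.2 i)) b with hjfull
  have hqj : q jfull.1 = i := by
    have h0 := jfull.2
    simp only [Sfin, Finset.mem_filter] at h0
    exact h0.2
  obtain ⟨v, hv⟩ := hlev jfull.1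
  have hvi : v.1 = i := by
    have h2 := hrq v (by rw [hv]; exact jfull.1.isLt)
    rw [show (⟨r v, _⟩ : Fin (∑ i, m i)) = jfull.1 from Fin.ext hv] at h2
    exact h2.symm.trans hqj
  obtain ⟨i', a⟩ := v
  dsimp only at hvi
  subst hvi
  refine ⟨a, ?_⟩
  show ((Sfin m q i').orderIsoOfFin (hPat.2 i')).symm _ = b
  rw [show (⟨⟨r ⟨i', a⟩, hrlt ⟨i', a⟩⟩, _⟩ : {x // x ∈ Sfin m q i'}) = jfull from
    Subtype.ext (Fin.ext hv), hjfull]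
  exact ((Sfin m q i').orderIsoOfFin (hPat.2 i')).symm_apply_apply b

theorem gdef_spec (hPat : PatP m q) (hrlt : ∀ v, r v < ∑ i, m i)
    (hrq : ∀ (v) (h : r v < ∑ i, m i), q ⟨r v, h⟩ = v.1) (v : Σ i : Fin k, Fin (n i)) :
    psi m q hPat (gdef m q r hPat hrlt hrq) v = r v := by
  show (((Sfin m q v.1).orderIsoOfFin (hPat.2 v.1))
    (((Sfin m q v.1).orderIsoOfFin (hPat.2 v.1)).symm _) : Fin (∑ i, m i)).val = r v
  rw [OrderIso.apply_symm_apply]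

end Psi

section Fiber

variable {k : ℕ} {n : Fin k → ℕ}

theorem card_level_fiber (m : Fin k → ℕ) :
    Nat.card {r : (Σ i : Fin k, Fin (n i)) → ℕ // Cond r ∧ sig r = m} =
      Nat.card {q : Fin (∑ i, m i) → Fin k // PatP m q} *
        ∏ i, Nat.card {g : Fin (n i) → Fin (m i) // Function.Surjective g} := by
  classical
  rw [← Nat.card_pi, ← Nat.card_prod]
  refine (Nat.card_eq_of_bijective (fun p :
      {q : Fin (∑ i, m i) → Fin k // PatP m q} ×
        (∀ i, {g : Fin (n i) → Fin (m i) // Function.Surjective g}) =>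
    (⟨psi m p.1.1 p.1.2 (fun i => (p.2 i).1),
      cond_psi m p.1.1 p.1.2 _ (fun i => (p.2 i).2),
      sig_psi m p.1.1 p.1.2 _ (fun i => (p.2 i).2)⟩ :
      {r : (Σ i : Fin k, Fin (n i)) → ℕ // Cond r ∧ sig r = m})) ⟨?_, ?_⟩).symm
  · -- injectivity
    rintro ⟨⟨q1, hq1⟩, g1⟩ ⟨⟨q2, hq2⟩, g2⟩ hpp
    have hr : psi m q1 hq1 (fun i => (g1 i).1) = psi m q2 hq2 (fun i => (g2 i).1) :=
      congrArg Subtype.val hpp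
    have hqq : q1 = q2 := by
      funext j
      obtain ⟨v, hv⟩ := psi_level_surj m q1 hq1 (fun i => (g1 i).1) (fun i => (g1 i).2) j
      have h1 : q1 j = v.1 := by
        have := q_psi m q1 hq1 (fun i => (g1 i).1) v (psi_lt _ _ _ _ v)
        rwa [show (⟨psi m q1 hq1 (fun i => (g1 i).1) v, psi_lt _ _ _ _ v⟩ :
          Fin (∑ i, m i)) = j from Fin.ext hv] at this
      have hv2 : psi m q2 hq2 (fun i => (g2 i).1) v = j.val := by
        rw [← congrFun hr v]
        exact hv
      have h2 : q2 j = v.1 := by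
        have := q_psi m q2 hq2 (fun i => (g2 i).1) v (psi_lt _ _ _ _ v)
        rwa [show (⟨psi m q2 hq2 (fun i => (g2 i).1) v, psi_lt _ _ _ _ v⟩ :
          Fin (∑ i, m i)) = j from Fin.ext hv2] at this
      rw [h1, h2]
    subst hqq
    refine Prod.ext (Subtype.ext rfl) ?_
    funext i
    apply Subtype.ext
    funext a
    have hval := congrFun hr ⟨i, a⟩
    have hfin : (((Sfin m q1 i).orderIsoOfFin (hq1.2 i)) ((g1 i).1 a)) =
        (((Sfin m q1 i).orderIsoOfFin (hq2.2 i)) ((g2 i).1 a)) :=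
      Subtype.ext (Fin.ext hval)
    have hiso : ((Sfin m q1 i).orderIsoOfFin (hq1.2 i)) = ((Sfin m q1 i).orderIsoOfFin (hq2.2 i)) := rfl
    rw [← hiso] at hfin
    exact ((Sfin m q1 i).orderIsoOfFin (hq1.2 i)).injective hfin
  · -- surjectivity
    rintro ⟨r, hC, hsig⟩
    have hsum : ∑ i, sig r i = ∑ i, m i := by rw [hsig]
    have hrlt : ∀ v, r v < ∑ i, m i := fun v => by
      have := cond_lt_sum_sig r hC v
      omega
    have hw : ∀ j : Fin (∑ i, m i), ∃ v, r v = j.val := by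
      intro j
      have hj : j.val ∈ Finset.image r Finset.univ := by
        rw [cond_mem_image_iff r hC, cond_card_image r hC, hsum]
        exact j.isLt
      obtain ⟨v, -, hv⟩ := Finset.mem_image.mp hj
      exact ⟨v, hv⟩
    set q : Fin (∑ i, m i) → Fin k := fun j => (Classical.choose (hw j)).1 with hqdef
    have hqspec : ∀ j, r (Classical.choose (hw j)) = j.val := fun j => Classical.choose_spec (hw j)
    have hrq : ∀ (v) (h : r v < ∑ i, m i), q ⟨r v, h⟩ = v.1 := by
      intro v h
      exact hC.1 (Classical.choose (hw ⟨r v, h⟩)) v (by rw [hqspec])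
    have hPat : PatP m q := by
      constructor
      · intro j h1 h2
        refine hC.2.1 (Classical.choose (hw ⟨j, h1⟩)) (Classical.choose (hw ⟨j + 1, h2⟩)) ?_
        rw [hqspec, hqspec]
      · intro i
        have hiff : ∀ j : Fin (∑ i, m i), q j = i ↔
            j.val ∈ Finset.image (fun a : Fin (n i) => r ⟨i, a⟩) Finset.univ := by
          intro j
          constructor
          · intro hji
            have hv := hqspec j
            have hvi : (Classical.choose (hw j)).1 = i := hji
            set v := Classical.choose (hw j) with hvdef
            obtain ⟨i', a⟩ := v
            dsimp only at hvi
            subst hvi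
            exact Finset.mem_image.mpr ⟨a, Finset.mem_univ _, hv⟩
          · intro hmem
            obtain ⟨a, -, ha⟩ := Finset.mem_image.mp hmem
            have := hrq ⟨i, a⟩ (by rw [ha]; exact j.isLt)
            rwa [show (⟨r ⟨i, a⟩, _⟩ : Fin (∑ i, m i)) = j from Fin.ext ha] at this
        have hbij : (Finset.univ.filter fun j => q j = i).card =
            (Finset.image (fun a : Fin (n i) => r ⟨i, a⟩) Finset.univ).card := by
          refine Finset.card_bij (fun j _ => j.val) ?_ ?_ ?_
          · intro j hj
            exact (hiff j).mp (Finset.mem_filter.mp hj).2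
          · intro a _ b _ hab
            exact Fin.ext hab
          · intro x hx
            have hxlt : x < ∑ i, m i := by
              obtain ⟨a, -, ha⟩ := Finset.mem_image.mp hx
              rw [← ha]
              exact hrlt _
            exact ⟨⟨x, hxlt⟩, Finset.mem_filter.mpr ⟨Finset.mem_univ _,
              (hiff ⟨x, hxlt⟩).mpr hx⟩, rfl⟩
        rw [hbij]
        exact congrFun hsig i
    refine ⟨⟨⟨q, hPat⟩, fun i => ⟨gdef m q r hPat hrlt hrq i,
      gdef_surj m q r hPat hrlt hrq hw i⟩⟩, ?_⟩
    exact Subtype.ext (funext fun v => gdef_spec m q r hPat hrlt hrq v)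

end Fiber

end PartB


end AOP

/-- The number of acyclic orientations of the complete `k`-partite graph with part sizes
`n` equals `∑_{m, 1 ≤ mᵢ ≤ nᵢ} s_m · ∏ᵢ S(nᵢ, mᵢ)`, where `s_m` is the number of
Hamiltonian paths (as vertex sequences) of the complete `k`-partite graph with part
sizes `m`, and `S` is the Stirling number of the second kind. -/

theorem ao_completeMultipartite_eq_sum (k : ℕ) (hk : 2 ≤ k) (n : Fin k → ℕ)
    (hn : ∀ i, 1 ≤ n i) :
    Nat.card (AcyclicOrientation (completeMultipartiteGraph fun i : Fin k => Fin (n i))) =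
      ∑ m ∈ Fintype.piFinset (fun i : Fin k => Finset.Icc 1 (n i)),
        hamCount (completeMultipartiteGraph fun i : Fin k => Fin (m i)) *
          ∏ i : Fin k, stirling (n i) (m i) := by
  classical
  rw [Nat.card_congr (AOP.levelEquiv (π := fun i : Fin k => Fin (n i)))]
  haveI : Fintype {r : (Σ i : Fin k, Fin (n i)) → ℕ // AOP.Cond r} := Fintype.ofFinite _
  have hmem : ∀ x : {r : (Σ i : Fin k, Fin (n i)) → ℕ // AOP.Cond r},
      AOP.sig x.1 ∈ Fintype.piFinset (fun i : Fin k => Finset.Icc 1 (n i)) := by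
    intro x
    rw [Fintype.mem_piFinset]
    intro i
    rw [Finset.mem_Icc]
    constructor
    · have hne : (Finset.univ : Finset (Fin (n i))).Nonempty :=
        ⟨⟨0, hn i⟩, Finset.mem_univ _⟩
      exact Finset.card_pos.mpr (hne.image _)
    · calc (Finset.image (fun a : Fin (n i) => x.1 ⟨i, a⟩) Finset.univ).card
          ≤ (Finset.univ : Finset (Fin (n i))).card := Finset.card_image_le
        _ = n i := by simp
  rw [AOP.nat_card_fiberwise (fun x => AOP.sig x.1) _ hmem]
  refine Finset.sum_congr rfl fun m _ => ?_
  have e1 : {x : {r : (Σ i : Fin k, Fin (n i)) → ℕ // AOP.Cond r} // AOP.sig x.1 = m} ≃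
      {r : (Σ i : Fin k, Fin (n i)) → ℕ // AOP.Cond r ∧ AOP.sig r = m} :=
    Equiv.subtypeSubtypeEquivSubtypeInter AOP.Cond (fun r => AOP.sig r = m)
  rw [Nat.card_congr e1, AOP.card_level_fiber m, AOP.hamCount_eq_pat m,
    Finset.prod_congr rfl (fun i _ => AOP.card_surjections (n i) (m i)),
    Finset.prod_mul_distrib]
  ring
end

section
/- Let k ≥ 2 and let G_n be the complete k-partite graph with vertex set V = V_1 ∪ … ∪ V_k, |V_i| = n_i ≥ 1. Then the number of acyclic orientations of G_n equals the number of finite sequences (B_1, …, B_t) of nonempty pairwise disjoint subsets of V whose union is all of V, such that each B_j is contained in a single part V_i, and no two consecutive blocks B_j, B_{j+1} are contained in the same part. -/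
open SimpleGraph

namespace AOProof

attribute [local instance] Classical.propDecidable

/-! ### Rank function of a well-founded relation -/

noncomputable def rank {α : Type*} [Fintype α] (d : α → α → Prop) (hwf : WellFounded d) :
    α → ℕ :=
  hwf.fix (fun v ih =>
    (Finset.univ.filter (fun u => d u v)).attach.sup
      (fun u => ih u.1 (by have := u.2; simp only [Finset.mem_filter] at this; exact this.2) + 1))

lemma rank_def {α : Type*} [Fintype α] (d : α → α → Prop) (hwf : WellFounded d) (v : α) :
    rank d hwf v =
      (Finset.univ.filter (fun u => d u v)).attach.sup (fun u => rank d hwf u.1 + 1) := by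
  unfold rank
  rw [WellFounded.fix_eq]

lemma rank_lt {α : Type*} [Fintype α] {d : α → α → Prop} (hwf : WellFounded d) {u v : α}
    (h : d u v) : rank d hwf u < rank d hwf v := by
  have hm : u ∈ Finset.univ.filter (fun u => d u v) := by simp [h]
  have h1 := Finset.le_sup (f := fun u : {x // x ∈ Finset.univ.filter (fun u => d u v)} =>
    rank d hwf u.1 + 1) (Finset.mem_attach _ ⟨u, hm⟩)
  rw [← rank_def] at h1
  have h2 : rank d hwf u + 1 ≤ rank d hwf v := h1
  omega

lemma rank_le {α : Type*} [Fintype α] {d : α → α → Prop} (hwf : WellFounded d) {v : α} {m : ℕ}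
    (h : ∀ u, d u v → rank d hwf u + 1 ≤ m) : rank d hwf v ≤ m := by
  rw [rank_def]
  apply Finset.sup_le
  rintro ⟨u, hu⟩ -
  simp only [Finset.mem_filter] at hu
  exact h u hu.2

lemma rank_succ {α : Type*} [Fintype α] {d : α → α → Prop} (hwf : WellFounded d) {v : α} {r : ℕ}
    (h : rank d hwf v = r + 1) : ∃ u, d u v ∧ rank d hwf u = r := by
  rw [rank_def] at h
  have hne : (Finset.univ.filter (fun u => d u v)).attach.Nonempty := by
    rw [Finset.attach_nonempty_iff]
    by_contra hemp
    rw [Finset.not_nonempty_iff_eq_empty] at hemp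
    rw [hemp] at h
    simp at h
  obtain ⟨⟨u, hu⟩, -, hsup⟩ := Finset.exists_mem_eq_sup _ hne
    (fun u : {x // x ∈ Finset.univ.filter (fun u => d u v)} => rank d hwf u.1 + 1)
  simp only [Finset.mem_filter] at hu
  have hsup' : (Finset.univ.filter (fun u => d u v)).attach.sup
      (fun u => rank d hwf u.1 + 1) = rank d hwf u + 1 := hsup
  exact ⟨u, hu.2, by omega⟩

lemma exists_rank_eq {α : Type*} [Fintype α] {d : α → α → Prop} (hwf : WellFounded d) :
    ∀ m (v : α), rank d hwf v = m → ∀ r ≤ m, ∃ u, rank d hwf u = r := by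
  intro m
  induction m using Nat.strong_induction_on with
  | _ m ih =>
    intro v hv r hr
    rcases eq_or_lt_of_le hr with rfl | hlt
    · exact ⟨v, hv⟩
    · obtain ⟨m', rfl⟩ : ∃ m', m = m' + 1 := ⟨m - 1, by omega⟩
      obtain ⟨u, -, hu⟩ := rank_succ hwf hv
      exact ih m' (by omega) u hu r (by omega)

/-! ### Lists of blocks -/

variable {ι : Type*} {W : ι → Type*}

/-- The validity predicate from the theorem statement. -/
def Valid (L : List (Finset (Σ i, W i))) : Prop :=
  (∀ B ∈ L, B.Nonempty) ∧
  L.Pairwise Disjoint ∧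
  (∀ v : Σ i, W i, ∃ B ∈ L, v ∈ B) ∧
  (∀ B ∈ L, ∃ i, ∀ v ∈ B, Sigma.fst v = i) ∧
  L.Chain' (fun B C => ∀ v ∈ B, ∀ w ∈ C, Sigma.fst v ≠ Sigma.fst w)

noncomputable def idx (L : List (Finset (Σ i, W i))) (v : Σ i, W i) : ℕ :=
  L.findIdx (fun B => decide (v ∈ B))

lemma idx_lt_length {L : List (Finset (Σ i, W i))} {v : Σ i, W i}
    (h : ∃ B ∈ L, v ∈ B) : idx L v < L.length :=
  List.findIdx_lt_length_of_exists (by simpa using h)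

lemma mem_get_idx {L : List (Finset (Σ i, W i))} {v : Σ i, W i}
    (h : ∃ B ∈ L, v ∈ B) : v ∈ L[idx L v]'(idx_lt_length h) := by
  have := List.findIdx_getElem (p := fun B => decide (v ∈ B)) (xs := L) (w := idx_lt_length h)
  simp only [decide_eq_true_eq] at this
  unfold idx
  convert this using 3

lemma idx_eq {L : List (Finset (Σ i, W i))} (hd : L.Pairwise Disjoint) {v : Σ i, W i} {j : ℕ}
    (hj : j < L.length) (hv : v ∈ L[j]) : idx L v = j := by
  have hex : ∃ B ∈ L, v ∈ B := ⟨L[j], List.getElem_mem hj, hv⟩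
  have h1 := mem_get_idx hex
  by_contra hne
  have hdisj : Disjoint (L[idx L v]'(idx_lt_length hex)) L[j] := by
    rcases Nat.lt_or_ge (idx L v) j with h | h
    · exact List.pairwise_iff_getElem.1 hd _ _ _ hj h
    · exact (List.pairwise_iff_getElem.1 hd _ _ hj _ (lt_of_le_of_ne h (Ne.symm hne))).symm
  exact Finset.disjoint_left.1 hdisj h1 hv

/-- The orientation induced by a list of blocks. -/
def dirOf (L : List (Finset (Σ i, W i))) (u v : Σ i, W i) : Prop :=
  u.1 ≠ v.1 ∧ idx L u < idx L v

section Fintype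

variable [Fintype ι] [∀ i, Fintype (W i)]

lemma adj_iff {u v : Σ i, W i} :
    (completeMultipartiteGraph W).Adj u v ↔ u.1 ≠ v.1 := by
  simp

lemma idx_ne {L : List (Finset (Σ i, W i))} (hL : Valid L) {u v : Σ i, W i}
    (hne : u.1 ≠ v.1) : idx L u ≠ idx L v := by
  intro h
  have hu := mem_get_idx (hL.2.2.1 u)
  have hv := mem_get_idx (hL.2.2.1 v)
  obtain ⟨i, hi⟩ := hL.2.2.2.1 _ (List.getElem_mem (idx_lt_length (hL.2.2.1 u)))
  have hv' : v ∈ L[idx L u]'(idx_lt_length (hL.2.2.1 u)) := by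
    convert hv using 2
  exact hne ((hi u hu).trans (hi v hv').symm)

/-- From a valid list of blocks to an acyclic orientation. -/
noncomputable def toOrient (L : List (Finset (Σ i, W i))) (hL : Valid L) :
    AcyclicOrientation (completeMultipartiteGraph W) where
  dir := dirOf L
  dir_adj u v h := adj_iff.2 h.1
  total u v h := by
    have hne : u.1 ≠ v.1 := adj_iff.1 h
    have := idx_ne hL hne
    constructor
    · rintro ⟨-, h1⟩ ⟨-, h2⟩; omega
    · intro h1
      refine ⟨hne, ?_⟩
      by_contra h2
      exact h1 ⟨hne.symm, by omega⟩
  acyclic v h := by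
    have key : ∀ a b, Relation.TransGen (dirOf L) a b → idx L a < idx L b := by
      intro a b hab
      induction hab with
      | single h => exact h.2
      | tail _ h ih => exact ih.trans h.2
    exact absurd (key v v h) (by omega)

lemma wf_dirOf (L : List (Finset (Σ i, W i))) : WellFounded (dirOf L) :=
  Subrelation.wf (fun h => h.2) (InvImage.wf (idx L) Nat.lt_wfRel.wf)

lemma rank_eq_idx {L : List (Finset (Σ i, W i))} (hL : Valid L) (v : Σ i, W i) :
    rank (dirOf L) (wf_dirOf L) v = idx L v := by
  suffices key : ∀ m (v : Σ i, W i), idx L v = m → rank (dirOf L) (wf_dirOf L) v = m from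
    key _ v rfl
  intro m
  induction m using Nat.strong_induction_on with
  | _ m ih =>
    intro v hv
    have upper : rank (dirOf L) (wf_dirOf L) v ≤ m := by
      apply rank_le
      intro u hu
      have h2 := hu.2
      rw [hv] at h2
      have := ih (idx L u) h2 u rfl
      omega
    cases m with
    | zero => omega
    | succ j =>
      have hvlt : idx L v < L.length := idx_lt_length (hL.2.2.1 v)
      have hjlt : j < L.length := by omega
      obtain ⟨u, hu⟩ := hL.1 _ (List.getElem_mem hjlt)
      have hidxu : idx L u = j := idx_eq hL.2.1 hjlt hu
      have hvmem : v ∈ L[j + 1]'(by omega) := by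
        have := mem_get_idx (hL.2.2.1 v)
        convert this using 2 <;> omega
      have hne : u.1 ≠ v.1 := by
        have hch := List.isChain_iff_getElem.1 hL.2.2.2.2 j (by omega)
        have := hch u (by simpa [List.get_eq_getElem] using hu) v
          (by simpa [List.get_eq_getElem] using hvmem)
        exact this
      have hd : dirOf L u v := ⟨hne, by omega⟩
      have h1 := rank_lt (wf_dirOf L) hd
      have h2 : rank (dirOf L) (wf_dirOf L) u = j := ih j (by omega) u hidxu
      omega

/-! ### From an orientation to a list of blocks -/

variable [Nonempty (Σ i, W i)]

lemma wf_dir (O : AcyclicOrientation (completeMultipartiteGraph W)) : WellFounded O.dir := by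
  have h1 : IsTrans (Σ i, W i) (Relation.TransGen O.dir) := inferInstance
  have h2 : IsIrrefl (Σ i, W i) (Relation.TransGen O.dir) := ⟨O.acyclic⟩
  exact Subrelation.wf (fun h => Relation.TransGen.single h)
    (Finite.wellFounded_of_trans_of_irrefl _)

noncomputable def orank (O : AcyclicOrientation (completeMultipartiteGraph W)) :
    (Σ i, W i) → ℕ := rank O.dir (wf_dir O)

lemma dir_or {O : AcyclicOrientation (completeMultipartiteGraph W)} {u v : Σ i, W i}
    (hne : u.1 ≠ v.1) : O.dir u v ∨ O.dir v u := by
  have h := O.total u v (adj_iff.2 hne)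
  by_cases hd : O.dir v u
  · exact Or.inr hd
  · exact Or.inl (h.2 hd)

lemma orank_fst {O : AcyclicOrientation (completeMultipartiteGraph W)} {u v : Σ i, W i}
    (h : orank O u = orank O v) : u.1 = v.1 := by
  by_contra hne
  rcases dir_or hne with hd | hd
  · exact absurd h (by have := rank_lt (wf_dir O) hd; unfold orank; omega)
  · exact absurd h (by have := rank_lt (wf_dir O) hd; unfold orank; omega)

noncomputable def maxRank (O : AcyclicOrientation (completeMultipartiteGraph W)) : ℕ :=
  Finset.univ.sup (orank O)

noncomputable def levels (O : AcyclicOrientation (completeMultipartiteGraph W)) :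
    List (Finset (Σ i, W i)) :=
  (List.range (maxRank O + 1)).map (fun j => Finset.univ.filter (fun v => orank O v = j))

lemma levels_length (O : AcyclicOrientation (completeMultipartiteGraph W)) :
    (levels O).length = maxRank O + 1 := by simp [levels]

lemma levels_getElem (O : AcyclicOrientation (completeMultipartiteGraph W)) {j : ℕ}
    (hj : j < (levels O).length) :
    (levels O)[j] = Finset.univ.filter (fun v => orank O v = j) := by
  simp [levels]

lemma exists_orank_eq (O : AcyclicOrientation (completeMultipartiteGraph W)) {r : ℕ}
    (hr : r ≤ maxRank O) : ∃ v, orank O v = r := by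
  obtain ⟨v, -, hv⟩ := Finset.exists_mem_eq_sup Finset.univ Finset.univ_nonempty (orank O)
  exact exists_rank_eq (wf_dir O) (maxRank O) v hv.symm r hr

lemma valid_levels (O : AcyclicOrientation (completeMultipartiteGraph W)) :
    Valid (levels O) := by
  refine ⟨?_, ?_, ?_, ?_, ?_⟩
  · intro B hB
    simp only [levels, List.mem_map, List.mem_range] at hB
    obtain ⟨j, hj, rfl⟩ := hB
    obtain ⟨v, hv⟩ := exists_orank_eq O (r := j) (by omega)
    exact ⟨v, by simp [hv]⟩
  · rw [levels, List.pairwise_map]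
    apply (List.pairwise_lt_range).imp
    intro a b hab
    rw [Finset.disjoint_left]
    intro v hv hv'
    simp only [Finset.mem_filter] at hv hv'
    omega
  · intro v
    refine ⟨Finset.univ.filter (fun u => orank O u = orank O v), ?_, by simp⟩
    simp only [levels, List.mem_map, List.mem_range]
    exact ⟨orank O v, by
      have : orank O v ≤ maxRank O := Finset.le_sup (Finset.mem_univ v)
      omega, rfl⟩
  · intro B hB
    simp only [levels, List.mem_map, List.mem_range] at hB
    obtain ⟨j, hj, rfl⟩ := hB
    obtain ⟨v, hv⟩ := exists_orank_eq O (r := j) (by omega)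
    refine ⟨v.1, ?_⟩
    intro u hu
    simp only [Finset.mem_filter] at hu
    exact orank_fst (by rw [hu.2, hv])
  · rw [levels]
    unfold List.Chain'
    rw [List.isChain_map]
    rw [show maxRank O + 1 = (maxRank O).succ from rfl, List.isChain_range_succ]
    intro m hm u hu w hw
    simp only [Finset.mem_filter] at hu hw
    obtain ⟨x, hx1, hx2⟩ := rank_succ (wf_dir O) (v := w) (r := m) hw.2
    have hxu : x.1 = u.1 := orank_fst
      (show orank O x = orank O u by rw [show orank O x = m from hx2, hu.2])
    have hxw : x.1 ≠ w.1 := adj_iff.1 (O.dir_adj _ _ hx1)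
    rw [← hxu]
    exact hxw

lemma idx_levels (O : AcyclicOrientation (completeMultipartiteGraph W)) (v : Σ i, W i) :
    idx (levels O) v = orank O v := by
  have hlt : orank O v < (levels O).length := by
    rw [levels_length]
    have : orank O v ≤ maxRank O := Finset.le_sup (Finset.mem_univ v)
    omega
  exact idx_eq (valid_levels O).2.1 hlt (by rw [levels_getElem]; simp)

lemma dirOf_levels (O : AcyclicOrientation (completeMultipartiteGraph W)) :
    dirOf (levels O) = O.dir := by
  funext u v
  apply propext
  constructor
  · rintro ⟨hne, hlt⟩
    rw [idx_levels, idx_levels] at hlt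
    rcases dir_or hne with hd | hd
    · exact hd
    · exact absurd hlt (by have := rank_lt (wf_dir O) hd; unfold orank at *; omega)
  · intro hd
    refine ⟨adj_iff.1 (O.dir_adj _ _ hd), ?_⟩
    rw [idx_levels, idx_levels]
    exact rank_lt (wf_dir O) hd

lemma levels_toOrient {L : List (Finset (Σ i, W i))} (hL : Valid L) :
    levels (toOrient L hL) = L := by
  have hrank : ∀ v, orank (toOrient L hL) v = idx L v := fun v => rank_eq_idx hL v
  have hlen : 1 ≤ L.length := by
    obtain ⟨B, hB, -⟩ := hL.2.2.1 (Classical.arbitrary _)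
    have := List.length_pos_iff.2 (List.ne_nil_of_mem hB)
    omega
  have hmax : maxRank (toOrient L hL) = L.length - 1 := by
    apply le_antisymm
    · apply Finset.sup_le
      intro v _
      rw [hrank]
      have := idx_lt_length (hL.2.2.1 v)
      omega
    · obtain ⟨u, hu⟩ := hL.1 _ (List.getElem_mem (show L.length - 1 < L.length by omega))
      have h2 : idx L u = L.length - 1 := idx_eq hL.2.1 (by omega) hu
      have h3 : orank (toOrient L hL) u ≤ maxRank (toOrient L hL) :=
        Finset.le_sup (Finset.mem_univ u)
      rw [hrank, h2] at h3
      exact h3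
  apply List.ext_getElem
  · rw [levels_length, hmax]; omega
  · intro j h1 h2
    rw [levels_getElem]
    apply Finset.ext
    intro v
    simp only [Finset.mem_filter, Finset.mem_univ, true_and]
    rw [hrank]
    constructor
    · intro hj
      have := mem_get_idx (hL.2.2.1 v)
      convert this using 2 <;> omega
    · intro hv
      exact idx_eq hL.2.1 h2 hv

lemma AO_ext {γ : Type*} {G : SimpleGraph γ} {a b : AcyclicOrientation G}
    (h : a.dir = b.dir) : a = b := by
  cases a
  cases b
  simp only at h
  subst h
  rfl

lemma toOrient_levels (O : AcyclicOrientation (completeMultipartiteGraph W)) :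
    toOrient (levels O) (valid_levels O) = O := AO_ext (dirOf_levels O)

/-- The bijection. -/
noncomputable def mainEquiv :
    {L : List (Finset (Σ i, W i)) // Valid L} ≃
      AcyclicOrientation (completeMultipartiteGraph W) where
  toFun L := toOrient L.1 L.2
  invFun O := ⟨levels O, valid_levels O⟩
  left_inv L := Subtype.ext (levels_toOrient L.2)
  right_inv O := toOrient_levels O

end Fintype

end AOProof

/-- The number of acyclic orientations of the complete `k`-partite graph equals the number
of sequences `(B_1, …, B_t)` of nonempty pairwise disjoint subsets of the vertex set whose
union is everything, each contained in a single part, with no two consecutive blocks in the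
same part. -/
theorem ao_eq_card_block_sequences (k : ℕ) (hk : 2 ≤ k) (n : Fin k → ℕ)
    (hn : ∀ i, 1 ≤ n i) :
    Nat.card (AcyclicOrientation (completeMultipartiteGraph fun i : Fin k => Fin (n i))) =
      Nat.card {L : List (Finset (Σ i : Fin k, Fin (n i))) //
        (∀ B ∈ L, B.Nonempty) ∧
        L.Pairwise Disjoint ∧
        (∀ v : Σ i : Fin k, Fin (n i), ∃ B ∈ L, v ∈ B) ∧
        (∀ B ∈ L, ∃ i : Fin k, ∀ v ∈ B, Sigma.fst v = i) ∧
        L.Chain' (fun B C => ∀ v ∈ B, ∀ w ∈ C, Sigma.fst v ≠ Sigma.fst w)} := by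
  have hne : Nonempty (Σ i : Fin k, Fin (n i)) :=
    ⟨⟨⟨0, by omega⟩, ⟨0, by have := hn ⟨0, by omega⟩; omega⟩⟩⟩
  exact (Nat.card_congr (AOProof.mainEquiv (W := fun i : Fin k => Fin (n i)))).symm
end

section
/- Let k ≥ 2 and m = (m_1, …, m_k) with every m_i ≥ 1, and let G_m be the complete k-partite graph with part sizes m. Then G_m has a Hamiltonian path if and only if for every i ∈ {1, …, k} one has ∑_{j ≠ i} m_j ≥ m_i − 1. -/
open SimpleGraph Finset

private lemma two_step_count {α β : Type*} [DecidableEq α] (f : β → α) (a : α) :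
    ∀ l : List β, l.Chain' (fun x y => f x ≠ f y) →
      2 * l.countP (fun x => f x = a) ≤ l.length + 1
  | [], _ => by simp
  | [x], _ => by by_cases h : f x = a <;> simp [List.countP_cons, h]
  | x :: y :: l, h => by
    obtain ⟨hxy, h2⟩ := List.isChain_cons_cons.mp h
    have ih := two_step_count f a l h2.tail
    by_cases hx : f x = a
    · have hy : ¬ (f y = a) := fun hy => hxy (hx.trans hy.symm)
      simp only [List.countP_cons, List.length_cons, hx, hy] at *
      simp at *
      omega
    · by_cases hy : f y = a <;>
        simp only [List.countP_cons, List.length_cons, hx, hy] at * <;> simp at * <;> omega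

private lemma greedy_aux {α β : Type*} [DecidableEq α] [DecidableEq β] (f : β → α) :
    ∀ (n : ℕ) (s : Multiset β) (p : Option α), Multiset.card s = n →
    (∀ a : α, 2 * Multiset.card (s.filter (fun x => f x = a)) ≤ n + 1) →
    (∀ a : α, p = some a → 2 * Multiset.card (s.filter (fun x => f x = a)) ≤ n) →
    ∃ l : List β, (l : Multiset β) = s ∧ l.Chain' (fun x y => f x ≠ f y) ∧
      ∀ x ∈ l.head?, some (f x) ≠ p := by
  intro n
  induction n with
  | zero =>
    intro s p hc _ _
    refine ⟨[], ?_, List.isChain_nil, by simp⟩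
    simpa using (Multiset.card_eq_zero.mp hc).symm
  | succ n ih =>
    intro s p hc h1 h2
    have hsne : s ≠ 0 := by
      intro h; rw [h] at hc; simp at hc
    set T : Finset α := (s.toFinset.image f).filter (fun a => some a ≠ p) with hT
    have hTne : T.Nonempty := by
      by_contra hemp
      rw [Finset.not_nonempty_iff_eq_empty] at hemp
      obtain ⟨b, hb⟩ := Multiset.exists_mem_of_ne_zero hsne
      have hbp : some (f b) = p := by
        by_contra hne
        have : f b ∈ T := by
          rw [hT]
          exact Finset.mem_filter.mpr ⟨Finset.mem_image_of_mem f (Multiset.mem_toFinset.mpr hb), hne⟩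
        simp [hemp] at this
      have hfull : s.filter (fun x => f x = f b) = s := by
        rw [Multiset.filter_eq_self]
        intro x hx
        by_contra hne
        have : f x ∈ T := by
          rw [hT]
          refine Finset.mem_filter.mpr ⟨Finset.mem_image_of_mem f (Multiset.mem_toFinset.mpr hx), ?_⟩
          rw [← hbp]
          exact fun h => hne (Option.some_injective _ h)
        simp [hemp] at this
      have := h2 (f b) hbp.symm
      rw [hfull, hc] at this
      omega
    obtain ⟨a, haT, hamax⟩ := T.exists_max_image
      (fun a => Multiset.card (s.filter (fun x => f x = a))) hTne
    obtain ⟨haim, hap⟩ := Finset.mem_filter.mp haT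
    obtain ⟨b, hbs, hfb⟩ := Finset.mem_image.mp haim
    rw [Multiset.mem_toFinset] at hbs
    set t : Multiset β := s.erase b with ht
    have hst : s = b ::ₘ t := (Multiset.cons_erase hbs).symm
    have hct : Multiset.card t = n := by
      have := hc; rw [hst] at this; simpa using this
    have hfa : Multiset.card (t.filter (fun x => f x = a)) + 1
        = Multiset.card (s.filter (fun x => f x = a)) := by
      rw [hst, Multiset.filter_cons_of_pos (p := fun x => f x = a) _ hfb]
      simp
    have hfc : ∀ c : α, c ≠ a →
        t.filter (fun x => f x = c) = s.filter (fun x => f x = c) := by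
      intro c hca
      rw [hst, Multiset.filter_cons_of_neg (p := fun x => f x = c)]
      rw [hfb]; exact fun h => hca h.symm
    have key : ∀ c : α, c ≠ a → 2 * Multiset.card (s.filter (fun x => f x = c)) ≤ n + 1 := by
      intro c hca
      by_contra hbig
      push_neg at hbig
      have hcpos : 0 < Multiset.card (s.filter (fun x => f x = c)) := by omega
      have hne0 : s.filter (fun x => f x = c) ≠ 0 := by
        intro h0; rw [h0] at hcpos; simp at hcpos
      obtain ⟨x, hx⟩ := Multiset.exists_mem_of_ne_zero hne0
      obtain ⟨hxs, hxc⟩ := Multiset.mem_filter.mp hx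
      by_cases hcp : some c = p
      · have := h2 c hcp.symm
        omega
      · have hcT : c ∈ T := by
          rw [hT]
          refine Finset.mem_filter.mpr ⟨?_, hcp⟩
          rw [← hxc]
          exact Finset.mem_image_of_mem f (Multiset.mem_toFinset.mpr hxs)
        have hle := hamax c hcT
        -- disjoint filters
        have hdisj : Multiset.card (s.filter (fun x => f x = a))
            + Multiset.card (s.filter (fun x => f x = c)) ≤ Multiset.card s := by
          have := Multiset.filter_add_filter (fun x => f x = a) (fun x => f x = c) s
          have hand : s.filter (fun x => f x = a ∧ f x = c) = 0 := by
            rw [Multiset.filter_eq_nil]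
            rintro x hx ⟨h1', h2'⟩
            exact hca (h1'.symm.trans h2').symm
          calc Multiset.card (s.filter (fun x => f x = a))
                + Multiset.card (s.filter (fun x => f x = c))
              = Multiset.card (s.filter (fun x => f x = a) + s.filter (fun x => f x = c)) := by
                simp
            _ = Multiset.card (s.filter (fun x => f x = a ∨ f x = c)
                  + s.filter (fun x => f x = a ∧ f x = c)) := by rw [this]
            _ = Multiset.card (s.filter (fun x => f x = a ∨ f x = c)) := by rw [hand]; simp
            _ ≤ Multiset.card s := Multiset.card_le_card (Multiset.filter_le _ s)
        rw [hc] at hdisj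
        omega
    obtain ⟨l, hl, hlc, hlh⟩ := ih t (some a) hct
      (by
        intro c
        by_cases hca : c = a
        · subst hca
          have := h1 c
          omega
        · rw [hfc c hca]
          exact key c hca)
      (by
        intro c hc'
        have hca : c = a := Option.some_injective _ hc'.symm
        subst hca
        have := h1 c
        omega)
    refine ⟨b :: l, ?_, ?_, ?_⟩
    · rw [hst, ← hl]; rfl
    · refine List.isChain_cons.mpr ?_
      refine ⟨?_, hlc⟩
      intro y hy
      have := hlh y hy
      rw [hfb]
      exact fun h => this (by rw [h])
    · intro x hx
      simp only [List.head?_cons, Option.mem_def, Option.some.injEq] at hx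
      subst hx
      rw [hfb]
      exact hap

private lemma card_filter_fst {k : ℕ} (m : Fin k → ℕ) (i : Fin k) :
    (Finset.univ.filter (fun x : Σ j : Fin k, Fin (m j) => x.1 = i)).card = m i := by
  rw [Finset.card_filter, ← Finset.univ_sigma_univ, Finset.sum_sigma]
  simp [apply_ite Finset.card, Finset.sum_ite_eq']

/-- The complete `k`-partite graph with part sizes `m` has a Hamiltonian path if and only if
for every `i` one has `∑_{j ≠ i} m j ≥ m i - 1`. -/
theorem hamiltonianPath_completeMultipartite_iff (k : ℕ) (hk : 2 ≤ k) (m : Fin k → ℕ)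
    (hm : ∀ i, 1 ≤ m i) :
    (∃ l : List (Σ i : Fin k, Fin (m i)), l.Nodup ∧ (∀ v, v ∈ l) ∧
        l.Chain' (completeMultipartiteGraph fun i : Fin k => Fin (m i)).Adj) ↔
      ∀ i : Fin k, m i - 1 ≤ ∑ j ∈ Finset.univ.erase i, m j := by
  have hcard : Fintype.card (Σ i : Fin k, Fin (m i)) = ∑ j, m j := by
    simp [Fintype.card_sigma]
  have hadj : ∀ x y : Σ i : Fin k, Fin (m i),
      (completeMultipartiteGraph fun i : Fin k => Fin (m i)).Adj x y ↔ x.1 ≠ y.1 := by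
    intro x y; simp [completeMultipartiteGraph]
  constructor
  · rintro ⟨l, hnd, hmem, hch⟩ i
    have hlm : (l : Multiset (Σ i : Fin k, Fin (m i))) = (Finset.univ).val := by
      rw [Multiset.Nodup.ext (by simpa using hnd) Finset.univ.nodup]
      intro a; simp [hmem a]
    have hlen : l.length = ∑ j, m j := by
      have : Multiset.card (l : Multiset (Σ i : Fin k, Fin (m i)))
          = Multiset.card (Finset.univ : Finset (Σ i : Fin k, Fin (m i))).val := by rw [hlm]
      simpa [hcard] using this
    have hcount : l.countP (fun x => x.1 = i) = m i := by
      have h1 : Multiset.countP (fun x : Σ j : Fin k, Fin (m j) => x.1 = i) (l : Multiset _)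
          = Multiset.countP (fun x : Σ j : Fin k, Fin (m j) => x.1 = i)
            (Finset.univ : Finset (Σ j : Fin k, Fin (m j))).val := by rw [hlm]
      rw [Multiset.coe_countP] at h1
      rw [Multiset.countP_eq_card_filter] at h1
      have h2 : Multiset.card (Multiset.filter (fun x : Σ j : Fin k, Fin (m j) => x.1 = i)
          (Finset.univ).val) = (Finset.univ.filter (fun x : Σ j : Fin k, Fin (m j) => x.1 = i)).card := rfl
      rw [h2, card_filter_fst] at h1
      exact h1
    have hch' : l.Chain' (fun x y : Σ j : Fin k, Fin (m j) => x.1 ≠ y.1) :=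
      hch.imp (fun x y h => (hadj x y).mp h)
    have := two_step_count (fun x : Σ j : Fin k, Fin (m j) => x.1) i l hch'
    rw [hcount, hlen] at this
    have hsum := Finset.add_sum_erase Finset.univ m (Finset.mem_univ i)
    have hmi := hm i
    omega
  · intro h
    have hsum : ∀ i : Fin k, m i + ∑ j ∈ Finset.univ.erase i, m j = ∑ j, m j :=
      fun i => Finset.add_sum_erase Finset.univ m (Finset.mem_univ i)
    obtain ⟨l, hl, hch, -⟩ := greedy_aux (fun x : Σ j : Fin k, Fin (m j) => x.1)
      (∑ j, m j) (Finset.univ).val none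
      (by
        have h0 : Multiset.card (Finset.univ.val : Multiset (Σ j : Fin k, Fin (m j)))
            = Fintype.card (Σ j : Fin k, Fin (m j)) := rfl
        rw [h0, hcard])
      (by
        intro a
        have h2 : Multiset.card (Multiset.filter (fun x : Σ j : Fin k, Fin (m j) => x.1 = a)
            (Finset.univ).val) = (Finset.univ.filter (fun x : Σ j : Fin k, Fin (m j) => x.1 = a)).card := rfl
        rw [h2, card_filter_fst]
        have := h a
        have := hsum a
        have := hm a
        omega)
      (by simp)
    refine ⟨l, ?_, ?_, ?_⟩
    · have : (l : Multiset (Σ j : Fin k, Fin (m j))).Nodup := hl ▸ Finset.univ.nodup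
      simpa using this
    · intro v
      have : v ∈ (l : Multiset (Σ j : Fin k, Fin (m j))) := by rw [hl]; simp
      simpa using this
    · exact hch.imp (fun x y hxy => (hadj x y).mpr hxy)
end

section
/- Let k ≥ 2 and m = (m_1, …, m_k) with every m_i ≥ 1, and let G_m be the complete k-partite graph with part sizes m. If for every index i ∈ {1, …, k} one has ∑_{j ≠ i} m_j ≥ m_i − 1, then G_m has a Hamiltonian path. -/
open SimpleGraph

/-- Key combinatorial lemma: a multiset of colored items in which no color occupies more
than `(n+1)/2` items (and a forbidden color `f` at most `n/2`) can be arranged into a list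
with no two adjacent items of the same color, not starting with color `f`. -/
lemma arrange_no_adjacent {α β : Type*} [DecidableEq β] (color : α → β) :
    ∀ (n : ℕ) (s : Multiset α), s.card = n → 0 < n → ∀ f : β,
      (∀ b, (s.filter fun a => color a = b).card ≤ (n + 1) / 2) →
      ((s.filter fun a => color a = f).card ≤ n / 2) →
      ∃ l : List α, (l : Multiset α) = s ∧
        l.Chain' (fun a b => color a ≠ color b) ∧ ∀ hd ∈ l.head?, color hd ≠ f := by
  intro n
  induction n using Nat.strong_induction_on with
  | _ n ih =>
    intro s hcard hn f hball hf
    -- there is an element whose color is not `f`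
    have hex : ∃ a ∈ s, color a ≠ f := by
      by_contra hcon
      push_neg at hcon
      have hfe : s.filter (fun a => color a = f) = s := Multiset.filter_eq_self.2 hcon
      rw [hfe, hcard] at hf
      omega
    -- set of colors present in `s`, other than `f`
    classical
    set F : Finset β := (s.toFinset.image color).erase f with hF
    have hFne : F.Nonempty := by
      obtain ⟨a, ha, haf⟩ := hex
      exact ⟨color a, Finset.mem_erase.2 ⟨haf,
        Finset.mem_image_of_mem _ (Multiset.mem_toFinset.2 ha)⟩⟩
    obtain ⟨c, hcF, hcmax⟩ :=
      F.exists_max_image (fun b => (s.filter fun a => color a = b).card) hFne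
    have hcf : c ≠ f := (Finset.mem_erase.1 hcF).1
    obtain ⟨x, hxs, hxc⟩ : ∃ x ∈ s, color x = c := by
      obtain ⟨x, hx, hxc⟩ := Finset.mem_image.1 (Finset.mem_of_mem_erase hcF)
      exact ⟨x, Multiset.mem_toFinset.1 hx, hxc⟩
    set t : Multiset α := s.erase x with ht
    have hts : x ::ₘ t = s := Multiset.cons_erase hxs
    have htcard : t.card = n - 1 := by
      have := congrArg Multiset.card hts
      rw [Multiset.card_cons, hcard] at this
      omega
    -- counting relation between s and t
    have hcnt : ∀ b, (s.filter fun a => color a = b).card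
        = (t.filter fun a => color a = b).card + (if color x = b then 1 else 0) := by
      intro b
      rw [← hts, Multiset.filter_cons]
      split_ifs <;> simp [add_comm]
    by_cases hn1 : n = 1
    · refine ⟨[x], ?_, List.isChain_singleton x, ?_⟩
      · have : t = 0 := by
          rw [← Multiset.card_eq_zero, htcard, hn1]
        rw [← hts, this]
        rfl
      · intro hd hhd
        simp only [List.head?] at hhd
        cases hhd
        rw [hxc]; exact hcf
    · -- n ≥ 2 : recurse on t with forbidden color c
      have hn2 : 2 ≤ n := by omega
      -- disjointness bound: counts of two distinct colors add up to at most n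
      have hsum : ∀ b, b ≠ c →
          (s.filter fun a => color a = b).card + (s.filter fun a => color a = c).card ≤ n := by
        intro b hbc
        have h1 := Multiset.filter_add_filter (fun a => color a = b) (fun a => color a = c) s
        have h2 : (s.filter fun a => color a = b ∧ color a = c) = 0 := by
          rw [Multiset.filter_eq_nil]
          rintro a ha ⟨h1', h2'⟩
          exact hbc (h1' ▸ h2'.symm ▸ rfl)
        have h3 : (s.filter fun a => color a = b ∨ color a = c).card ≤ n := by
          rw [← hcard]
          exact Multiset.card_le_card (Multiset.filter_le _ s)
        have := congrArg Multiset.card h1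
        rw [Multiset.card_add, Multiset.card_add, h2] at this
        simp only [Multiset.card_zero, add_zero] at this
        omega
      have hble : ∀ b, b ≠ c → b ≠ f → (s.filter fun a => color a = b).card ≤ n / 2 := by
        intro b hbc hbf
        by_cases hbF : b ∈ F
        · have hmax := hcmax b hbF
          have hs := hsum b hbc
          omega
        · have : (s.filter fun a => color a = b) = 0 := by
            rw [Multiset.filter_eq_nil]
            intro a ha hab
            exact hbF (Finset.mem_erase.2 ⟨hbf,
              hab ▸ Finset.mem_image_of_mem _ (Multiset.mem_toFinset.2 ha)⟩)
          rw [this]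
          simp
      have hcle := hball c
      obtain ⟨l', hl't, hl'chain, hl'head⟩ := ih (n - 1) (by omega) t htcard (by omega) c
        (by
          intro b
          by_cases hbc : b = c
          · subst hbc
            have := hcnt b
            rw [if_pos hxc] at this
            omega
          · have := hcnt b
            rw [if_neg (hxc ▸ fun h => hbc (by rw [← h]))] at this
            by_cases hbf : b = f
            · subst hbf
              omega
            · have := hble b hbc hbf
              omega)
        (by
          have := hcnt c
          rw [if_pos hxc] at this
          omega)
      refine ⟨x :: l', ?_, ?_, ?_⟩
      · rw [← hts, ← hl't]
        rfl
      · rw [List.Chain', List.isChain_cons]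
        refine ⟨fun y hy => ?_, hl'chain⟩
        have := hl'head y hy
        rw [hxc]
        exact fun hcy => this hcy.symm
      · intro hd hhd
        simp only [List.head?] at hhd
        cases hhd
        rw [hxc]; exact hcf

/-- If every part of a complete `k`-partite graph satisfies `∑_{j ≠ i} m j ≥ m i - 1`, then
the graph has a Hamiltonian path. -/
theorem hamiltonianPath_completeMultipartite (k : ℕ) (hk : 2 ≤ k) (m : Fin k → ℕ)
    (hm : ∀ i, 1 ≤ m i) (h : ∀ i : Fin k, m i - 1 ≤ ∑ j ∈ Finset.univ.erase i, m j) :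
    ∃ l : List (Σ i : Fin k, Fin (m i)), l.Nodup ∧ (∀ v, v ∈ l) ∧
        l.Chain' (completeMultipartiteGraph fun i : Fin k => Fin (m i)).Adj := by
  classical
  set V := Σ i : Fin k, Fin (m i)
  set N : ℕ := ∑ j, m j with hN
  set s : Multiset V := (Finset.univ : Finset V).val with hs
  have hscard : s.card = N := by
    rw [hs, ← Finset.card_def, Finset.card_univ, Fintype.card_sigma]
    simp [hN]
  have hNpos : 0 < N := by
    exact Finset.sum_pos (fun i _ => hm i) ⟨⟨0, by omega⟩, Finset.mem_univ _⟩
  -- count of color i is m i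
  have hcount : ∀ i : Fin k,
      (s.filter fun a : V => (some a.1 : Option (Fin k)) = some i).card = m i := by
    intro i
    have heq : (s.filter fun a : V => (some a.1 : Option (Fin k)) = some i)
        = (Finset.univ.filter fun a : V => a.1 = i).val := by
      rw [Finset.filter_val]
      congr 1
      ext a
      simp
    have e : {a : V // a.1 = i} ≃ Fin (m i) :=
      { toFun := fun a => Fin.cast (congrArg m a.2) a.1.2
        invFun := fun x => ⟨⟨i, x⟩, rfl⟩
        left_inv := by rintro ⟨⟨j, y⟩, rfl⟩; rfl
        right_inv := fun x => rfl }
    rw [heq, ← Finset.card_def, ← Fintype.card_subtype]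
    rw [Fintype.card_congr e, Fintype.card_fin]
  have hballe : ∀ i : Fin k, m i ≤ (N + 1) / 2 := by
    intro i
    have h1 := h i
    have h2 : ∑ j ∈ Finset.univ.erase i, m j = N - m i := by
      have := Finset.sum_erase_add Finset.univ m (Finset.mem_univ i)
      omega
    have h3 : m i ≤ N := by
      have := Finset.single_le_sum (f := m) (fun j _ => Nat.zero_le _) (Finset.mem_univ i)
      omega
    omega
  obtain ⟨l, hl, hchain, -⟩ := arrange_no_adjacent
    (fun a : V => (some a.1 : Option (Fin k))) N s hscard hNpos none
    (by
      intro b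
      match b with
      | none =>
        have : (s.filter fun a : V => (some a.1 : Option (Fin k)) = none) = 0 := by
          rw [Multiset.filter_eq_nil]; intro a _ hc; exact Option.some_ne_none _ hc
        rw [this]; simp
      | some i =>
        rw [hcount i]; exact hballe i)
    (by
      have : (s.filter fun a : V => (some a.1 : Option (Fin k)) = none) = 0 := by
        rw [Multiset.filter_eq_nil]; intro a _ hc; exact Option.some_ne_none _ hc
      rw [this]; simp)
  refine ⟨l, ?_, ?_, ?_⟩
  · have := Finset.univ.nodup (α := V)
    rw [← hs, ← hl] at this
    exact this
  · intro v
    have : v ∈ (l : Multiset V) := by rw [hl]; exact Finset.mem_univ v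
    exact this
  · refine hchain.imp fun a b hab => ?_
    simp only [comap_adj, top_adj]
    exact fun hfst => hab (by rw [hfst])
end

section
/- Let k ≥ 2, let m = (m_1, …, m_k) with every m_i ≥ 1, fix i ∈ {1, …, k}, and let m' be obtained from m by increasing the i-th coordinate by 1. For a tuple v of positive part sizes, let s_v denote the number of Hamiltonian paths (counted as vertex sequences, so a path and its reversal count as two) of the complete k-partite graph with part sizes v. If for every ℓ ∈ {1, …, k} one has ∑_{j ≠ ℓ} m'_j ≥ m'_ℓ − 1, then s_{m'} = s_m · (1 − m_i + ∑_{j ≠ i} m_j) + ∑_{j ≠ i, m_j ≥ 2} m_j · (m_j − 1) · s_{m − e_j}, where m − e_j is obtained from m by decreasing the j-th coordinate by 1. (Under the stated hypothesis the quantity 1 − m_i + ∑_{j ≠ i} m_j is a positive integer.) -/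
open SimpleGraph
set_option linter.unusedSectionVars false
set_option maxHeartbeats 1000000

namespace HamRec

variable {V W P : Type*}

/-- The complete multipartite graph determined by a part function. -/
def pg (f : V → P) : SimpleGraph V where
  Adj u v := f u ≠ f v
  symm := ⟨fun _ _ h => Ne.symm h⟩
  loopless := ⟨fun _ h => h rfl⟩

lemma pg_adj (f : V → P) (u v : V) : (pg f).Adj u v ↔ f u ≠ f v := Iff.rfl

lemma finite_sub [Finite V] (p : List V → Prop) (h : ∀ l, p l → l.Nodup) :
    Finite {l : List V // p l} := by
  classical
  cases nonempty_fintype V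
  exact Finite.of_injective (fun x => (⟨x.1, h _ x.2⟩ : {l : List V // l.Nodup}))
    (fun a b hab => Subtype.ext (by simpa using congrArg Subtype.val hab))

instance hpFinite [Finite V] (G : SimpleGraph V) :
    Finite {l : List V // l.Nodup ∧ (∀ v, v ∈ l) ∧ l.Chain' G.Adj} :=
  finite_sub _ (fun _ h => h.1)

/-- `hamCount` is invariant under part-preserving bijections. -/
lemma hamCount_congr {G : SimpleGraph V} {H : SimpleGraph W} (e : V → W)
    (hbij : Function.Bijective e) (hadj : ∀ u v, G.Adj u v ↔ H.Adj (e u) (e v)) :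
    hamCount G = hamCount H := by
  let E := Equiv.ofBijective e hbij
  have hE : ∀ v, E v = e v := fun _ => rfl
  refine Nat.card_congr ⟨fun l => ⟨l.1.map e, l.2.1.map hbij.injective, fun w => ?_,
      (List.isChain_map e).2 <| l.2.2.2.imp fun a b h => (hadj a b).1 h⟩,
    fun l => ⟨l.1.map E.symm, l.2.1.map E.symm.injective, fun v => ?_, ?_⟩, fun l => ?_, fun l => ?_⟩
  · obtain ⟨v, rfl⟩ := hbij.surjective w
    exact List.mem_map_of_mem (f := e) (l.2.2.1 v)
  · have := l.2.2.1 (E v)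
    have h2 : E.symm (E v) = v := E.symm_apply_apply v
    exact h2 ▸ List.mem_map_of_mem (f := E.symm) this
  · refine (List.isChain_map E.symm).2 <| l.2.2.2.imp fun a b h => ?_
    refine (hadj _ _).2 ?_
    rw [← hE, ← hE]; rwa [E.apply_symm_apply, E.apply_symm_apply]
  · refine Subtype.ext ?_
    simp only [List.map_map]
    have : E.symm ∘ e = id := by funext v; exact E.symm_apply_apply v
    simp [this]
  · refine Subtype.ext ?_
    simp only [List.map_map]
    have : e ∘ E.symm = id := by funext v; exact E.apply_symm_apply v
    simp [this]

section Main

variable [DecidableEq P] (f : V → P) (i : P)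

/-- Hamiltonian-path condition. -/
def HPc (f : V → P) (l : List V) : Prop :=
  l.Nodup ∧ (∀ v, v ∈ l) ∧ l.Chain' (pg f).Adj

lemma hamCount_pg (f : V → P) : hamCount (pg f) = Nat.card {l : List V // HPc f l} := rfl

/-- The extended part function on `Option V`. -/
def fo : Option V → P := fun o => o.elim i f

/-- Condition on a pair of lists to encode a Hamiltonian path of the extended graph. -/
def Q (q : List V × List V) : Prop :=
  (q.1 ++ q.2).Nodup ∧ (∀ v, v ∈ q.1 ++ q.2) ∧ q.1.Chain' (pg f).Adj ∧
    q.2.Chain' (pg f).Adj ∧ (∀ u ∈ q.1.getLast?, f u ≠ i) ∧ (∀ w ∈ q.2.head?, f w ≠ i)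

lemma eq_map_some : ∀ {c : List (Option V)}, none ∉ c → c = c.reduceOption.map some
  | [], _ => rfl
  | none :: t, h => absurd (List.mem_cons_self) h
  | some v :: t, h => by
    rw [List.reduceOption_cons_of_some, List.map_cons]
    exact congrArg _ (eq_map_some fun hm => h (List.mem_cons_of_mem _ hm))

lemma hp_iff_Q (q : List V × List V) :
    HPc (fo f i) (q.1.map some ++ none :: q.2.map some) ↔ Q f i q := by
  obtain ⟨a, b⟩ := q
  constructor
  · rintro ⟨h1, h2, h3⟩
    rw [List.Chain', List.isChain_append, List.isChain_cons] at h3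
    refine ⟨?_, fun v => ?_, ?_, ?_, fun u hu => ?_, fun w hw => ?_⟩
    · rw [List.nodup_append] at h1 ⊢
      refine ⟨h1.1.of_map, ((List.nodup_cons.1 h1.2.1).2).of_map, fun x hx y hx' hxy => ?_⟩
      subst hxy
      exact h1.2.2 _ (List.mem_map_of_mem (f := some) hx) _ (List.mem_cons_of_mem _ (List.mem_map_of_mem (f := some) hx')) rfl
    · have := h2 (some v)
      simp only [List.mem_append, List.mem_cons, List.mem_map] at this ⊢
      rcases this with h | h | h
      · obtain ⟨x, hx, hxe⟩ := h; cases hxe; exact Or.inl hx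
      · cases h
      · obtain ⟨x, hx, hxe⟩ := h; cases hxe; exact Or.inr hx
    · exact (List.isChain_map some).1 h3.1
    · exact (List.isChain_map some).1 h3.2.1.2
    · have := h3.2.2 (some u) (by rw [List.getLast?_map]; exact Option.mem_map_of_mem some hu)
        none (by simp)
      simpa [pg_adj, fo] using this
    · have := h3.2.1.1 (some w) (by rw [List.head?_map]; exact Option.mem_map_of_mem some hw)
      simpa [pg_adj, fo] using fun h => (this h.symm)
  · rintro ⟨h1, h2, h3, h4, h5, h6⟩
    refine ⟨?_, fun o => ?_, ?_⟩
    · rw [List.nodup_append] at h1 ⊢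
      refine ⟨h1.1.map (Option.some_injective V), List.nodup_cons.2 ⟨by simp, h1.2.1.map (Option.some_injective V)⟩, fun x hx y hx' hxy => ?_⟩
      subst hxy
      simp only [List.mem_map] at hx
      obtain ⟨v, hv, rfl⟩ := hx
      simp only [List.mem_cons, List.mem_map] at hx'
      rcases hx' with h | ⟨v', hv', hve⟩
      · exact absurd h (by simp)
      · cases hve; exact h1.2.2 _ hv _ hv' rfl
    · cases o with
      | none => simp
      | some v =>
        have := h2 v
        simp only [List.mem_append] at this
        rcases this with h | h
        · exact List.mem_append_left _ (List.mem_map_of_mem (f := some) h)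
        · exact List.mem_append_right _ (List.mem_cons_of_mem _ (List.mem_map_of_mem (f := some) h))
    · rw [List.Chain', List.isChain_append, List.isChain_cons]
      refine ⟨(List.isChain_map some).2 h3, ⟨fun y hy => ?_, (List.isChain_map some).2 h4⟩,
        fun x hx y hy => ?_⟩
      · rw [List.head?_map] at hy
        obtain ⟨w, hw, rfl⟩ := Option.mem_map.1 hy
        exact fun h => h6 w hw h.symm
      · simp only [List.head?_cons, Option.mem_def, Option.some.injEq] at hy
        subst hy
        rw [List.getLast?_map] at hx
        obtain ⟨u, hu, rfl⟩ := Option.mem_map.1 hx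
        exact h5 u hu

lemma card_T_eq_card_S :
    hamCount (pg (fo f i)) = Nat.card {q : List V × List V // Q f i q} := by
  classical
  rw [hamCount_pg]
  refine (Nat.card_eq_of_bijective
    (fun q => ⟨q.1.1.map some ++ none :: q.1.2.map some, (hp_iff_Q f i q.1).2 q.2⟩)
    ⟨fun q q' hqq' => ?_, fun l => ?_⟩).symm
  · have h := congrArg Subtype.val hqq'
    simp only at h
    have hinj : ∀ {a b a' b' : List V}, a.map some ++ none :: b.map some
        = a'.map some ++ none :: b'.map some → a = a' ∧ b = b' := by
      intro a b a' b' hh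
      rcases List.append_eq_append_iff.1 hh with ⟨c, hc1, hc2⟩ | ⟨c, hc1, hc2⟩
      · cases c with
        | nil => simp at hc1 hc2
                 exact ⟨List.map_injective_iff.2 (Option.some_injective V) hc1.symm,
                   List.map_injective_iff.2 (Option.some_injective V) hc2⟩
        | cons y t =>
          obtain rfl : (none : Option V) = y := by
            have := congrArg List.head? hc2; simpa using this
          have : (none : Option V) ∈ a'.map some := hc1 ▸ List.mem_append_right _ (List.mem_cons_self)
          simp at this
      · cases c with
        | nil => simp at hc1 hc2
                 exact ⟨List.map_injective_iff.2 (Option.some_injective V) hc1,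
                   List.map_injective_iff.2 (Option.some_injective V) hc2.symm⟩
        | cons y t =>
          obtain rfl : (none : Option V) = y := by
            have := congrArg List.head? hc2; simpa using this
          have : (none : Option V) ∈ a.map some := hc1 ▸ List.mem_append_right _ (List.mem_cons_self)
          simp at this
    obtain ⟨h1, h2⟩ := hinj h
    exact Subtype.ext (Prod.ext h1 h2)
  · obtain ⟨l, hl⟩ := l
    have hnone : (none : Option V) ∈ l := hl.2.1 none
    obtain ⟨c, d, rfl⟩ := List.append_of_mem hnone
    have hnd := hl.1
    rw [List.nodup_append] at hnd
    have hnc : (none : Option V) ∉ c := fun h => hnd.2.2 _ h _ (List.mem_cons_self) rfl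
    have hnd' : (none : Option V) ∉ d := (List.nodup_cons.1 hnd.2.1).1
    refine ⟨⟨(c.reduceOption, d.reduceOption), (hp_iff_Q f i _).1 ?_⟩, ?_⟩
    · have : c.reduceOption.map some ++ none :: d.reduceOption.map some = c ++ none :: d := by
        rw [← eq_map_some hnc, ← eq_map_some hnd']
      rw [HPc, this]
      exact hl
    · refine Subtype.ext ?_
      simp only
      rw [← eq_map_some hnc, ← eq_map_some hnd']

lemma card_split (α : Type*) [Finite α] (p : α → Prop) :
    Nat.card α = Nat.card {a // p a} + Nat.card {a // ¬ p a} := by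
  classical
  rw [← Nat.card_sum]
  exact Nat.card_congr (Equiv.sumCompl p).symm

/-- A "good" configuration: the two sides of the gap lie in different parts. -/
def good (q : List V × List V) : Prop :=
  ∀ u ∈ q.1.getLast?, ∀ w ∈ q.2.head?, f u ≠ f w

/-- The gap condition: position `n` of `l` is not adjacent to a part-`i` vertex. -/
def gcond (l : List V) (n : ℕ) : Prop :=
  (∀ u ∈ (l.take n).getLast?, f u ≠ i) ∧ (∀ w ∈ (l.drop n).head?, f w ≠ i)

open Classical in
/-- The finset of good gaps. -/
noncomputable def gapF (l : List V) : Finset ℕ :=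
  (Finset.range (l.length + 1)).filter (gcond f i l)

/-- The good part is equivalent to paths with a marked good gap. -/
noncomputable def goodEquiv :
    {q : {q : List V × List V // Q f i q} // good f q.1} ≃
      Σ l : {l : List V // HPc f l}, {n : ℕ // n ∈ gapF f i l.1} where
  toFun q := by
    classical
    refine ⟨⟨q.1.1.1 ++ q.1.1.2, q.1.2.1, q.1.2.2.1, List.isChain_append.2
      ⟨q.1.2.2.2.1, q.1.2.2.2.2.1, fun x hx y hy => q.2 x hx y hy⟩⟩,
      ⟨q.1.1.1.length, ?_⟩⟩
    rw [gapF, Finset.mem_filter, Finset.mem_range]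
    refine ⟨by simp [Nat.lt_succ_iff], ?_, ?_⟩
    · rw [List.take_left]; exact q.1.2.2.2.2.2.1
    · rw [List.drop_left]; exact q.1.2.2.2.2.2.2
  invFun x := by
    classical
    obtain ⟨⟨l, hl⟩, ⟨n, hn⟩⟩ := x
    rw [gapF, Finset.mem_filter, Finset.mem_range] at hn
    have hch : l.Chain' (pg f).Adj := hl.2.2
    rw [← List.take_append_drop n l, List.Chain', List.isChain_append] at hch
    refine ⟨⟨(l.take n, l.drop n), ?_, ?_, hch.1, hch.2.1, hn.2.1, hn.2.2⟩,
      fun x hx y hy => hch.2.2 x hx y hy⟩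
    · rw [List.take_append_drop]; exact hl.1
    · rw [List.take_append_drop]; exact hl.2.1
  left_inv q := by
    refine Subtype.ext (Subtype.ext ?_)
    simp only [List.take_left, List.drop_left]
  right_inv x := by
    classical
    obtain ⟨⟨l, hl⟩, ⟨n, hn⟩⟩ := x
    rw [gapF, Finset.mem_filter, Finset.mem_range, Nat.lt_succ_iff] at hn
    exact Sigma.subtype_ext (Subtype.ext (List.take_append_drop n l))
      (by simp [List.length_take, hn.1])

lemma gapF_card [Fintype V] [DecidableEq V] {l : List V} (hl : HPc f l) :
    (gapF f i l).card + 2 * (Finset.univ.filter (fun v => f v = i)).card = l.length + 1 := by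
  classical
  set L := l.length with hL
  set B2 : Finset ℕ := (Finset.range (L + 1)).filter
    (fun n => ∃ w ∈ (l.drop n).head?, f w = i) with hB2
  set B1 : Finset ℕ := (Finset.range (L + 1)).filter
    (fun n => ∃ u ∈ (l.take n).getLast?, f u = i) with hB1
  have memB2 : ∀ n, n ∈ B2 ↔ ∃ h : n < L, f (l[n]'h) = i := by
    intro n
    rw [hB2, Finset.mem_filter, Finset.mem_range]
    constructor
    · rintro ⟨-, w, hw, hwi⟩
      rw [List.head?_drop] at hw
      have hn : n < L := by
        by_contra hc
        rw [List.getElem?_eq_none (by omega)] at hw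
        exact absurd hw (by simp)
      rw [List.getElem?_eq_getElem hn, Option.mem_def, Option.some_inj] at hw
      exact ⟨hn, hw ▸ hwi⟩
    · rintro ⟨h, hfi⟩
      refine ⟨by omega, l[n], ?_, hfi⟩
      rw [List.head?_drop, List.getElem?_eq_getElem h]
      rfl
  have memB1 : ∀ n, n ∈ B1 ↔ ∃ h : 1 ≤ n ∧ n - 1 < L, f (l[n-1]'h.2) = i := by
    intro n
    rw [hB1, Finset.mem_filter, Finset.mem_range]
    constructor
    · rintro ⟨hnr, u, hu, hui⟩
      rw [List.getLast?_take] at hu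
      by_cases h0 : n = 0
      · rw [if_pos h0] at hu; exact absurd hu (by simp)
      · rw [if_neg h0] at hu
        have hn : n - 1 < L := by omega
        rw [List.getElem?_eq_getElem hn] at hu
        have hor : (some (l[n-1]'hn)).or l.getLast? = some (l[n-1]'hn) := rfl
        rw [hor, Option.mem_def, Option.some_inj] at hu
        exact ⟨⟨by omega, hn⟩, hu ▸ hui⟩
    · rintro ⟨⟨h1, h2⟩, hfi⟩
      refine ⟨by omega, l[n-1], ?_, hfi⟩
      rw [List.getLast?_take, if_neg (by omega), List.getElem?_eq_getElem h2]
      rfl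
  have cardB2 : B2.card = (Finset.univ.filter (fun v => f v = i)).card := by
    refine Finset.card_bij (fun n hn => l[n]'((memB2 n).1 hn).1) ?_ ?_ ?_
    · intro n hn
      simp only [Finset.mem_filter, Finset.mem_univ, true_and]
      exact ((memB2 n).1 hn).2
    · intro n hn n' hn' hee
      exact (hl.1.getElem_inj_iff.1 hee)
    · intro v hv
      obtain ⟨n, hn, rfl⟩ := List.mem_iff_getElem.1 (hl.2.1 v)
      exact ⟨n, (memB2 n).2 ⟨hn, (Finset.mem_filter.1 hv).2⟩, rfl⟩
  have hB1img : B1 = B2.image (· + 1) := by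
    ext n
    rw [memB1, Finset.mem_image]
    constructor
    · rintro ⟨⟨h1, h2⟩, hfi⟩
      exact ⟨n - 1, (memB2 _).2 ⟨h2, hfi⟩, by omega⟩
    · rintro ⟨t, ht, rfl⟩
      obtain ⟨h, hfi⟩ := (memB2 t).1 ht
      exact ⟨⟨by omega, by simpa using h⟩, by simpa using hfi⟩
  have cardB1 : B1.card = (Finset.univ.filter (fun v => f v = i)).card := by
    rw [hB1img, Finset.card_image_of_injective _ (add_left_injective 1), cardB2]
  have hdisj : Disjoint B1 B2 := by
    rw [Finset.disjoint_left]
    intro n hn1 hn2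
    obtain ⟨⟨ha1, ha2⟩, hfa⟩ := (memB1 n).1 hn1
    obtain ⟨hb1, hfb⟩ := (memB2 n).1 hn2
    have hch := List.isChain_iff_getElem.1 hl.2.2 (n - 1) (by omega)
    rw [pg_adj] at hch
    apply hch
    have he1 : l.get ⟨n - 1, by omega⟩ = l[n-1]'ha2 := rfl
    have he2 : l.get ⟨n - 1 + 1, by omega⟩ = l[n]'hb1 := by
      simp only [List.get_eq_getElem, show n - 1 + 1 = n from by omega]
    simp only [List.get_eq_getElem] at he2
    rw [he2, hfa, hfb]
  have hcompl : (Finset.range (L + 1)).filter (fun n => ¬ gcond f i l n) = B1 ∪ B2 := by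
    ext n
    rw [Finset.mem_filter, Finset.mem_union, hB1, hB2, Finset.mem_filter, Finset.mem_filter,
      Finset.mem_range, gcond]
    constructor
    · rintro ⟨hn, hg⟩
      rw [not_and_or] at hg
      rcases hg with hg | hg
      · push_neg at hg
        obtain ⟨u, hu, hui⟩ := hg
        exact Or.inl ⟨hn, u, hu, hui⟩
      · push_neg at hg
        obtain ⟨w, hw, hwi⟩ := hg
        exact Or.inr ⟨hn, w, hw, hwi⟩
    · rintro (⟨hn, u, hu, hui⟩ | ⟨hn, w, hw, hwi⟩)
      · exact ⟨hn, fun hg => hg.1 u hu hui⟩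
      · exact ⟨hn, fun hg => hg.2 w hw hwi⟩
  have htot := Finset.card_filter_add_card_filter_not (s := Finset.range (L + 1))
    (gcond f i l)
  rw [hcompl, Finset.card_union_of_disjoint hdisj, Finset.card_range, cardB1, cardB2] at htot
  have : (gapF f i l).card = ((Finset.range (L + 1)).filter (gcond f i l)).card := by
    rw [gapF]
  omega

/-- Hamiltonian path of the graph with `w` removed. -/
def HPc' (w : V) (l : List V) : Prop :=
  l.Nodup ∧ (∀ v, v ≠ w → v ∈ l) ∧ w ∉ l ∧ l.Chain' (pg f).Adj

lemma not_good_spec {q : List V × List V} (hq : ¬ good f q) :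
    ∃ (ha : q.1 ≠ []) (hb : q.2 ≠ []), f (q.1.getLast ha) = f (q.2.head hb) := by
  rw [good] at hq
  push_neg at hq
  obtain ⟨u, hu, w, hw, hfq⟩ := hq
  have ha : q.1 ≠ [] := by rintro h; rw [h] at hu; exact absurd hu (by simp)
  have hb : q.2 ≠ [] := by rintro h; rw [h] at hw; exact absurd hw (by simp)
  refine ⟨ha, hb, ?_⟩
  rw [List.getLast?_eq_getLast ha, Option.mem_def, Option.some_inj] at hu
  rw [List.head?_eq_head hb, Option.mem_def, Option.some_inj] at hw
  rw [hu, hw]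
  exact hfq

lemma append_getLast_inj {a a' t t' : List V} (h : a ++ t = a' ++ t')
    (hnd : (a ++ t).Nodup) (ha : a ≠ []) (ha' : a' ≠ [])
    (hl : a.getLast ha = a'.getLast ha') : a = a' := by
  rcases List.append_eq_append_iff.1 h with ⟨c, hc1, hc2⟩ | ⟨c, hc1, hc2⟩
  · cases c with
    | nil => rw [hc1]; simp
    | cons y s =>
      exfalso
      have hcne : (y :: s : List V) ≠ [] := List.cons_ne_nil y s
      have hgl : a'.getLast ha' = (y :: s).getLast hcne := by
        rw [List.getLast_congr _ (by simp) hc1]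
        rw [List.getLast_append]
        simp
      have h1 : a.getLast ha ∈ a := List.getLast_mem ha
      have h2 : a.getLast ha ∈ y :: s := by rw [hl, hgl]; exact List.getLast_mem hcne
      rw [hc2] at hnd
      rw [List.nodup_append] at hnd
      exact hnd.2.2 _ h1 _ (List.mem_append_left _ h2) rfl
  · cases c with
    | nil => rw [hc1]; simp
    | cons y s =>
      exfalso
      have hcne : (y :: s : List V) ≠ [] := List.cons_ne_nil y s
      have hgl : a.getLast ha = (y :: s).getLast hcne := by
        rw [List.getLast_congr _ (by simp) hc1]
        rw [List.getLast_append]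
        simp
      have h1 : a'.getLast ha' ∈ a' := List.getLast_mem ha'
      have h2 : a'.getLast ha' ∈ y :: s := by rw [← hl, hgl]; exact List.getLast_mem hcne
      have hnd' : a.Nodup := ((List.nodup_append).1 hnd).1
      rw [hc1, List.nodup_append] at hnd'
      exact hnd'.2.2 _ h1 _ h2 rfl

lemma bad_ne1 {q : List V × List V} (hq : ¬ good f q) : q.1 ≠ [] := by
  rintro h; exact hq (fun u hu => by rw [h] at hu; simp at hu)

lemma bad_ne2 {q : List V × List V} (hq : ¬ good f q) : q.2 ≠ [] := by
  rintro h; exact hq (fun u hu w hw => by rw [h] at hw; simp at hw)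

lemma badMap_props {q : List V × List V} (hQ : Q f i q) (hq : ¬ good f q)
    (ha : q.1 ≠ []) (hb : q.2 ≠ []) :
    (q.1.getLast ha ≠ q.2.head hb ∧ f (q.1.getLast ha) = f (q.2.head hb) ∧
      f (q.1.getLast ha) ≠ i) ∧ HPc' f (q.2.head hb) (q.1 ++ q.2.tail) := by
  obtain ⟨a, b⟩ := q
  simp only at ha hb ⊢
  have hfe : f (a.getLast ha) = f (b.head hb) := by
    obtain ⟨ha', hb', hfe'⟩ := not_good_spec f hq
    exact hfe'
  obtain ⟨h1, h2, h3, h4, h5, h6⟩ := hQ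
  simp only at h1 h2 h3 h4 h5 h6
  refine ⟨⟨?_, hfe, ?_⟩, ?_, ?_, ?_, ?_⟩
  · intro he
    rw [List.nodup_append] at h1
    have hm := List.getLast_mem ha
    rw [he] at hm
    exact h1.2.2 _ hm _ (List.head_mem hb) rfl
  · exact h5 _ (List.getLast?_eq_getLast ha ▸ rfl)
  · exact h1.sublist (List.Sublist.append_left (List.tail_sublist b) a)
  · intro v hv
    rcases List.mem_append.1 (h2 v) with h | h
    · exact List.mem_append_left _ h
    · rw [← List.cons_head_tail hb, List.mem_cons] at h
      rcases h with h | h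
      · exact absurd h hv
      · exact List.mem_append_right _ h
  · intro hw
    rw [List.nodup_append] at h1
    rcases List.mem_append.1 hw with h | h
    · exact h1.2.2 _ h _ (List.head_mem hb) rfl
    · have hbd : b.Nodup := h1.2.1
      rw [← List.cons_head_tail hb, List.nodup_cons] at hbd
      exact hbd.1 h
  · rw [List.Chain', List.isChain_append]
    refine ⟨h3, h4.tail, fun x hx y hy => ?_⟩
    rw [List.getLast?_eq_getLast ha, Option.mem_def, Option.some_inj] at hx
    have hby : (pg f).Adj (b.head hb) y := by
      have := h4
      rw [← List.cons_head_tail hb, List.Chain', List.isChain_cons] at this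
      exact this.1 y hy
    rw [pg_adj] at hby ⊢
    rw [← hx, hfe]
    exact hby

/-- The data extracted from a bad configuration. -/
def badMap (q : {q : List V × List V // Q f i q}) (hq : ¬ good f q.1) :
    (p : {p : V × V // p.1 ≠ p.2 ∧ f p.1 = f p.2 ∧ f p.1 ≠ i}) ×
      {l : List V // HPc' f p.1.2 l} :=
  ⟨⟨(q.1.1.getLast (bad_ne1 f hq), q.1.2.head (bad_ne2 f hq)),
      (badMap_props f i q.2 hq (bad_ne1 f hq) (bad_ne2 f hq)).1⟩,
    ⟨q.1.1 ++ q.1.2.tail, (badMap_props f i q.2 hq (bad_ne1 f hq) (bad_ne2 f hq)).2⟩⟩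

lemma card_bad :
    Nat.card {q : {q : List V × List V // Q f i q} // ¬ good f q.1}
      = Nat.card ((p : {p : V × V // p.1 ≠ p.2 ∧ f p.1 = f p.2 ∧ f p.1 ≠ i}) ×
          {l : List V // HPc' f p.1.2 l}) := by
  refine Nat.card_eq_of_bijective (fun q => badMap f i q.1 q.2) ⟨?_, ?_⟩
  · rintro ⟨⟨⟨a, b⟩, hQ⟩, hq⟩ ⟨⟨⟨a', b'⟩, hQ'⟩, hq'⟩ heq
    simp only [badMap] at heq
    have h2 : a ++ b.tail = a' ++ b'.tail := congrArg (fun x => (x.2.1 : List V)) heq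
    have h1 : (a.getLast (bad_ne1 f hq), b.head (bad_ne2 f hq))
        = (a'.getLast (bad_ne1 f hq'), b'.head (bad_ne2 f hq')) := by
      have := congrArg (fun x => (x.1.1 : V × V)) heq
      exact this
    have hu : a.getLast (bad_ne1 f hq) = a'.getLast (bad_ne1 f hq') := congrArg Prod.fst h1
    have hw : b.head (bad_ne2 f hq) = b'.head (bad_ne2 f hq') := congrArg Prod.snd h1
    have hnd : (a ++ b.tail).Nodup :=
      hQ.1.sublist (List.Sublist.append_left (List.tail_sublist b) a)
    have haa : a = a' := append_getLast_inj h2 hnd _ _ hu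
    rw [haa] at h2
    have htail : b.tail = b'.tail := List.append_cancel_left h2
    have hbb : b = b' := by
      rw [← List.cons_head_tail (l := b) (bad_ne2 f hq), ← List.cons_head_tail (l := b') (bad_ne2 f hq'),
        hw, htail]
    exact Subtype.ext (Subtype.ext (Prod.ext haa hbb))
  · rintro ⟨⟨⟨u, w⟩, hne, hfe, hfi⟩, ⟨l₂, hnd₂, hcov₂, hwnot, hch₂⟩⟩
    simp only at hne hfe hfi hwnot
    have hu : u ∈ l₂ := hcov₂ u hne
    obtain ⟨c, d, rfl⟩ := List.append_of_mem hu
    have hl2eq : (c ++ [u]) ++ d = c ++ u :: d := by simp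
    have hch₂' : List.Chain' (pg f).Adj ((c ++ [u]) ++ d) := by rw [hl2eq]; exact hch₂
    have hgl : (c ++ [u]).getLast? = some u := List.getLast?_concat
    have hQab : Q f i (c ++ [u], w :: d) := by
      refine ⟨?_, ?_, ?_, ?_, ?_, ?_⟩
      · have hperm : ((c ++ [u]) ++ w :: d).Perm (w :: (c ++ u :: d)) := by
          have := List.perm_middle (a := w) (l₁ := c ++ [u]) (l₂ := d)
          rwa [hl2eq] at this
        exact hperm.nodup_iff.2 (List.nodup_cons.2 ⟨hwnot, hnd₂⟩)
      · intro v
        by_cases hv : v = w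
        · subst hv
          exact List.mem_append_right _ (List.mem_cons_self)
        · rcases List.mem_append.1 (hcov₂ v hv) with h | h
          · exact List.mem_append_left _ (List.mem_append_left _ h)
          · rcases List.mem_cons.1 h with h | h
            · exact List.mem_append_left _ (h ▸ List.mem_append_right _ (List.mem_cons_self))
            · exact List.mem_append_right _ (List.mem_cons_of_mem _ h)
      · exact (List.isChain_append.1 hch₂').1
      · rw [List.Chain', List.isChain_cons]
        refine ⟨fun y hy => ?_, (List.isChain_append.1 hch₂').2.1⟩
        have := (List.isChain_append.1 hch₂').2.2 u hgl y hy
        rw [pg_adj] at this ⊢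
        rw [hfe] at this
        exact this
      · intro x hx
        rw [hgl, Option.mem_def, Option.some_inj] at hx
        rw [← hx]
        exact hfi
      · intro x hx
        rw [List.head?_cons, Option.mem_def, Option.some_inj] at hx
        rw [← hx, ← hfe]
        exact hfi
    have hgood : ¬ good f ((c ++ [u], w :: d) : List V × List V) := by
      intro hg
      have := hg u (by rw [hgl]; rfl) w (by rw [List.head?_cons]; rfl)
      exact this hfe
    refine ⟨⟨⟨(c ++ [u], w :: d), hQab⟩, hgood⟩, ?_⟩
    refine Sigma.subtype_ext (Subtype.ext (Prod.ext ?_ ?_)) ?_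
    · show (c ++ [u]).getLast _ = u
      rw [← Option.some_inj, ← List.getLast?_eq_getLast _, hgl]
    · rfl
    · show (c ++ [u]) ++ (w :: d).tail = c ++ u :: d
      exact hl2eq

lemma card_HPc' (w : V) :
    Nat.card {l : List V // HPc' f w l}
      = hamCount (pg (fun v : {v : V // v ≠ w} => f v.1)) := by
  rw [hamCount_pg]
  have fwd : ∀ l : List {v : V // v ≠ w}, l.Nodup → (∀ x, x ∈ l) →
      l.Chain' (pg (fun v : {v : V // v ≠ w} => f v.1)).Adj →
      HPc' f w (l.map Subtype.val) := by
    intro l h1 h2 h3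
    refine ⟨h1.map Subtype.val_injective, fun v hvw =>
      List.mem_map.2 ⟨⟨v, hvw⟩, h2 ⟨v, hvw⟩, rfl⟩, fun hmem => ?_,
      (List.isChain_map Subtype.val).2 (h3.imp (fun x y h => h))⟩
    obtain ⟨x, hx, hxv⟩ := List.mem_map.1 hmem
    exact x.2 hxv
  refine (Nat.card_eq_of_bijective
    (fun l => ⟨l.1.map Subtype.val, fwd l.1 l.2.1 l.2.2.1 l.2.2.2⟩) ⟨?_, ?_⟩).symm
  · intro a b hab
    exact Subtype.ext (List.map_injective_iff.2 Subtype.val_injective (Subtype.mk_eq_mk.1 hab))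
  · rintro ⟨l₂, hnd₂, hcov₂, hwnot, hch₂⟩
    have hmap : (l₂.attach.map (fun x => (⟨x.1, fun he => hwnot (he ▸ x.2)⟩ : {v : V // v ≠ w}))).map Subtype.val = l₂ := by
      simp
    have h1 : (l₂.attach.map (fun x => (⟨x.1, fun he => hwnot (he ▸ x.2)⟩ : {v : V // v ≠ w}))).Nodup := by
      have : ((l₂.attach.map (fun x => (⟨x.1, fun he => hwnot (he ▸ x.2)⟩ : {v : V // v ≠ w}))).map Subtype.val).Nodup := by
        rw [hmap]; exact hnd₂
      exact this.of_map
    have h2 : ∀ x : {v : V // v ≠ w},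
        x ∈ l₂.attach.map (fun x => (⟨x.1, fun he => hwnot (he ▸ x.2)⟩ : {v : V // v ≠ w})) := by
      intro x
      have hx : x.1 ∈ l₂ := hcov₂ x.1 x.2
      rw [← hmap] at hx
      obtain ⟨y, hy, hyv⟩ := List.mem_map.1 hx
      have : y = x := Subtype.ext hyv
      exact this ▸ hy
    have h3 : (l₂.attach.map (fun x => (⟨x.1, fun he => hwnot (he ▸ x.2)⟩ : {v : V // v ≠ w}))).Chain'
        (pg (fun v : {v : V // v ≠ w} => f v.1)).Adj := by
      exact (List.isChain_map (R := (pg f).Adj) Subtype.val).1 (by rw [hmap]; exact hch₂)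
    exact ⟨⟨_, h1, h2, h3⟩, Subtype.ext hmap⟩

lemma card_bad_sum [Fintype V] [DecidableEq V] :
    Nat.card ((p : {p : V × V // p.1 ≠ p.2 ∧ f p.1 = f p.2 ∧ f p.1 ≠ i}) ×
        {l : List V // HPc' f p.1.2 l})
      = ∑ p ∈ Finset.univ.filter (fun p : V × V => p.1 ≠ p.2 ∧ f p.1 = f p.2 ∧ f p.1 ≠ i),
          hamCount (pg (fun v : {v : V // v ≠ p.2} => f v.1)) := by
  classical
  letI : ∀ p : {p : V × V // p.1 ≠ p.2 ∧ f p.1 = f p.2 ∧ f p.1 ≠ i},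
      Fintype {l : List V // HPc' f p.1.2 l} := fun p =>
    @Fintype.ofFinite _ (finite_sub _ (fun _ h => h.1))
  rw [Nat.card_eq_fintype_card, Fintype.card_sigma,
    Finset.sum_subtype (p := fun p : V × V => p.1 ≠ p.2 ∧ f p.1 = f p.2 ∧ f p.1 ≠ i)
      (Finset.univ.filter (fun p : V × V => p.1 ≠ p.2 ∧ f p.1 = f p.2 ∧ f p.1 ≠ i))
      (fun p => by simp) (fun p : V × V => hamCount (pg (fun v : {v : V // v ≠ p.2} => f v.1)))]
  refine Finset.sum_congr rfl (fun p _ => ?_)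
  rw [← card_HPc' f p.1.2, Nat.card_eq_fintype_card]

lemma card_good_add [Fintype V] [DecidableEq V] :
    Nat.card {q : {q : List V × List V // Q f i q} // good f q.1}
      + 2 * (Finset.univ.filter (fun v => f v = i)).card * hamCount (pg f)
      = hamCount (pg f) * (Fintype.card V + 1) := by
  classical
  letI : Fintype {l : List V // HPc f l} := @Fintype.ofFinite _ (finite_sub _ (fun _ h => h.1))
  have hlen : ∀ l : {l : List V // HPc f l}, l.1.length = Fintype.card V := by
    rintro ⟨l, hl⟩
    have : l.toFinset = Finset.univ := Finset.eq_univ_iff_forall.2 (fun v => List.mem_toFinset.2 (hl.2.1 v))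
    rw [← List.toFinset_card_of_nodup hl.1, this, Finset.card_univ]
  have key : ∀ l : {l : List V // HPc f l},
      (gapF f i l.1).card + 2 * (Finset.univ.filter (fun v => f v = i)).card
        = Fintype.card V + 1 := by
    intro l
    rw [← hlen l]
    exact gapF_card f i l.2
  rw [hamCount_pg, Nat.card_eq_fintype_card (α := {l : List V // HPc f l}),
    Nat.card_congr (goodEquiv f i), Nat.card_eq_fintype_card, Fintype.card_sigma]
  simp only [Fintype.card_coe]
  rw [← Finset.card_univ (α := {l : List V // HPc f l}), ← Finset.sum_const_nat (m := Fintype.card V + 1) (fun l _ => key l)]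
  rw [Finset.sum_add_distrib, Finset.sum_const, smul_eq_mul, Finset.card_univ]
  ring

theorem main_count [Fintype V] [DecidableEq V] (f : V → P) (i : P) :
    hamCount (pg (fo f i)) + 2 * (Finset.univ.filter (fun v => f v = i)).card * hamCount (pg f)
      = hamCount (pg f) * (Fintype.card V + 1)
        + ∑ p ∈ Finset.univ.filter (fun p : V × V => p.1 ≠ p.2 ∧ f p.1 = f p.2 ∧ f p.1 ≠ i),
            hamCount (pg (fun v : {v : V // v ≠ p.2} => f v.1)) := by
  classical
  have hfinS : Finite {q : List V × List V // Q f i q} := by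
    refine Finite.of_injective (fun q =>
      ((⟨q.1.1, q.2.1.of_append_left⟩ : {l : List V // l.Nodup}),
       (⟨q.1.2, q.2.1.of_append_right⟩ : {l : List V // l.Nodup}))) ?_
    intro q q' h
    rw [Prod.ext_iff] at h
    exact Subtype.ext (Prod.ext (congrArg Subtype.val h.1) (congrArg Subtype.val h.2))
  rw [card_T_eq_card_S f i, card_split _ (fun q : {q : List V × List V // Q f i q} => good f q.1)]
  rw [card_bad f i, card_bad_sum f i, ← card_good_add f i]
  ring

end Main

section Inst

variable {k : ℕ}

lemma sigEq {g : Fin k → ℕ} : ∀ {x y : Σ j, Fin (g j)}, x.1 = y.1 → x.2.1 = y.2.1 → x = y := by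
  rintro ⟨a, x⟩ ⟨a', y⟩ h1 h2
  subst h1
  simp only at h2
  exact congrArg _ (Fin.ext h2)

lemma hamCount_cmg (g : Fin k → ℕ) :
    hamCount (completeMultipartiteGraph (fun j => Fin (g j)))
      = hamCount (pg (Sigma.fst : (Σ j, Fin (g j)) → Fin k)) :=
  hamCount_congr id Function.bijective_id (fun u v => by
    simp [pg_adj, completeMultipartiteGraph, SimpleGraph.comap, top_adj])

lemma update_ge (m : Fin k → ℕ) (i : Fin k) (j : Fin k) :
    m j ≤ Function.update m i (m i + 1) j := by
  rcases eq_or_ne j i with h | h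
  · subst h; rw [Function.update_self]; omega
  · rw [Function.update_of_ne h]

lemma step_up (m : Fin k → ℕ) (i : Fin k) :
    hamCount (pg (fo (Sigma.fst : (Σ j, Fin (m j)) → Fin k) i))
      = hamCount (pg (Sigma.fst :
          (Σ j, Fin (Function.update m i (m i + 1) j)) → Fin k)) := by
  set m' := Function.update m i (m i + 1) with hm'
  have hmi : m i < m' i := by rw [hm', Function.update_self]; omega
  have hle : ∀ j, m j ≤ m' j := update_ge m i
  have hup : m' i = m i + 1 := by rw [hm', Function.update_self]
  have hup2 : ∀ j, j ≠ i → m' j = m j := fun j hj => by rw [hm', Function.update_of_ne hj]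
  refine hamCount_congr
    (fun o => o.elim ⟨i, ⟨m i, hmi⟩⟩ (fun v => ⟨v.1, ⟨v.2.1, lt_of_lt_of_le v.2.2 (hle v.1)⟩⟩))
    ⟨?_, ?_⟩ ?_
  · intro o o' h
    match o, o' with
    | none, none => rfl
    | none, some v =>
      exfalso
      obtain ⟨t, c⟩ := v
      have h1 : i = t := congrArg Sigma.fst h
      have h2 : m i = c.1 := congrArg (fun x : Σ j, Fin (m' j) => x.2.1) h
      subst h1
      have := c.2
      omega
    | some v, none =>
      exfalso
      obtain ⟨t, c⟩ := v
      have h1 : t = i := congrArg Sigma.fst h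
      have h2 : c.1 = m i := congrArg (fun x : Σ j, Fin (m' j) => x.2.1) h
      subst h1
      have := c.2
      omega
    | some v, some v' =>
      simp only [Option.elim] at h
      have h1 : v.1 = v'.1 := congrArg (fun x : Σ j, Fin (m' j) => x.1) h
      have h2 : v.2.1 = v'.2.1 := congrArg (fun x : Σ j, Fin (m' j) => x.2.1) h
      exact congrArg some (sigEq h1 h2)
  · rintro ⟨t, c⟩
    by_cases ht : t = i
    · subst ht
      by_cases hc : c.1 = m t
      · exact ⟨none, sigEq rfl hc.symm⟩
      · have hlt : c.1 < m t := by
          have h2 := c.2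
          omega
        exact ⟨some ⟨t, ⟨c.1, hlt⟩⟩, sigEq rfl rfl⟩
    · have hlt : c.1 < m t := by
        have h2 := c.2
        have h3 := hup2 t ht
        omega
      exact ⟨some ⟨t, ⟨c.1, hlt⟩⟩, sigEq rfl rfl⟩
  · intro u v
    cases u <;> cases v <;> exact Iff.rfl

lemma step_down (m : Fin k → ℕ) (w : Σ j, Fin (m j)) :
    hamCount (pg (fun v : {v : Σ j, Fin (m j) // v ≠ w} => v.1.1))
      = hamCount (pg (Sigma.fst :
          (Σ t, Fin (Function.update m w.1 (m w.1 - 1) t)) → Fin k)) := by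
  obtain ⟨j, b⟩ := w
  simp only
  set M := Function.update m j (m j - 1) with hM
  have hMj : M j = m j - 1 := by rw [hM, Function.update_self]
  have hM2 : ∀ t, t ≠ j → M t = m t := fun t ht => by rw [hM, Function.update_of_ne ht]
  have hb := b.2
  refine hamCount_congr
    (fun v => (⟨v.1.1, if h : v.1.1 = j ∧ b.1 < v.1.2.1
      then ⟨v.1.2.1 - 1, by
        have h4 := v.1.2.2
        have h5 : m v.1.1 = m j := congrArg m h.1
        have h8 : M v.1.1 = m j - 1 := by rw [h.1, hMj]
        omega⟩
      else ⟨v.1.2.1, by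
        by_cases hj : v.1.1 = j
        · have h6 : ¬ b.1 < v.1.2.1 := fun hh => h ⟨hj, hh⟩
          have h7 : v.1.2.1 ≠ b.1 := fun hv => v.2 (sigEq hj hv)
          have h4 := v.1.2.2
          have h5 : m v.1.1 = m j := congrArg m hj
          have h8 : M v.1.1 = m j - 1 := by rw [hj, hMj]
          omega
        · rw [hM2 _ hj]
          exact v.1.2.2⟩⟩ : Σ t, Fin (M t)))
    ((Fintype.bijective_iff_surjective_and_card _).2 ⟨?_, ?_⟩)
    (fun u v => Iff.rfl)
  · rintro ⟨t, c⟩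
    by_cases ht : t = j
    · subst ht
      have hc2 := c.2
      by_cases hcb : c.1 < b.1
      · refine ⟨⟨⟨t, ⟨c.1, by omega⟩⟩, fun he => ?_⟩, sigEq rfl ?_⟩
        · have := congrArg (fun x : Σ t', Fin (m t') => x.2.1) he
          simp only at this
          omega
        · show (dite _ _ _ : Fin (M t)).1 = c.1
          rw [dif_neg (fun hh : t = t ∧ b.1 < c.1 => by omega)]
      · refine ⟨⟨⟨t, ⟨c.1 + 1, by omega⟩⟩, fun he => ?_⟩, sigEq rfl ?_⟩
        · have := congrArg (fun x : Σ t', Fin (m t') => x.2.1) he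
          simp only at this
          omega
        · show (dite _ _ _ : Fin (M t)).1 = c.1
          rw [dif_pos (⟨rfl, by omega⟩ : t = t ∧ b.1 < c.1 + 1)]
          simp only
          omega
    · have hc2 := c.2
      have h3 := hM2 t ht
      refine ⟨⟨⟨t, ⟨c.1, by omega⟩⟩, fun he => ht (congrArg (fun x : Σ t', Fin (m t') => x.1) he)⟩,
        sigEq rfl ?_⟩
      show (dite _ _ _ : Fin (M t)).1 = c.1
      rw [dif_neg (fun hh : t = j ∧ _ => ht hh.1)]
  · have h1 : Fintype.card {v : Σ t, Fin (m t) // v ≠ ⟨j, b⟩}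
        = Fintype.card (Σ t, Fin (m t)) - 1 := by
      rw [Fintype.card_subtype_compl (fun v : Σ t, Fin (m t) => v = ⟨j, b⟩),
        Fintype.card_subtype_eq]
    have h2 : Fintype.card (Σ t, Fin (m t)) = ∑ t, m t := by
      simp [Fintype.card_sigma]
    have h3 : Fintype.card (Σ t, Fin (M t)) = ∑ t, M t := by
      simp [Fintype.card_sigma]
    have h4 : ∑ t, M t = (m j - 1) + ∑ t ∈ Finset.univ \ {j}, m t := by
      rw [hM]
      exact Finset.sum_update_of_mem (Finset.mem_univ j) m (m j - 1)
    have h5 : m j + ∑ t ∈ Finset.univ.erase j, m t = ∑ t, m t :=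
      Finset.add_sum_erase _ _ (Finset.mem_univ j)
    rw [← Finset.erase_eq] at h4
    omega

lemma card_part (m : Fin k → ℕ) (j : Fin k) :
    (Finset.univ.filter (fun v : Σ t, Fin (m t) => v.1 = j)).card = m j := by
  rw [← Fintype.card_subtype, ← Fintype.card_fin (m j)]
  refine (Fintype.card_congr (Equiv.ofBijective
    (fun a : Fin (m j) => (⟨⟨j, a⟩, rfl⟩ : {v : Σ t, Fin (m t) // v.1 = j})) ⟨?_, ?_⟩)).symm
  · intro a b hab
    have := congrArg (fun x : {v : Σ t, Fin (m t) // v.1 = j} => x.1.2.1) hab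
    simp only at this
    exact Fin.ext this
  · rintro ⟨⟨t, x⟩, ht⟩
    simp only at ht
    subst ht
    exact ⟨x, rfl⟩

lemma card_Aj (m : Fin k → ℕ) (i j : Fin k) (hne : j ≠ i) :
    ((Finset.univ.filter (fun p : (Σ t, Fin (m t)) × (Σ t, Fin (m t)) =>
        p.1 ≠ p.2 ∧ p.1.1 = p.2.1 ∧ p.1.1 ≠ i)).filter
      (fun p => p.2.1 = j)).card = m j * m j - m j := by
  have heq : (Finset.univ.filter (fun p : (Σ t, Fin (m t)) × (Σ t, Fin (m t)) =>
        p.1 ≠ p.2 ∧ p.1.1 = p.2.1 ∧ p.1.1 ≠ i)).filter (fun p => p.2.1 = j)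
      = (Finset.univ.filter (fun v : Σ t, Fin (m t) => v.1 = j)).offDiag := by
    ext p
    rw [Finset.mem_filter, Finset.mem_filter, Finset.mem_offDiag]
    simp only [Finset.mem_filter, Finset.mem_univ, true_and]
    constructor
    · rintro ⟨⟨h1, h2, h3⟩, h4⟩
      exact ⟨h2.trans h4, h4, h1⟩
    · rintro ⟨h1, h2, h3⟩
      exact ⟨⟨h3, h1.trans h2.symm, h1.symm ▸ hne⟩, h2⟩
  rw [heq, Finset.offDiag_card, card_part]

lemma card_Ai (m : Fin k → ℕ) (i : Fin k) :
    ((Finset.univ.filter (fun p : (Σ t, Fin (m t)) × (Σ t, Fin (m t)) =>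
        p.1 ≠ p.2 ∧ p.1.1 = p.2.1 ∧ p.1.1 ≠ i)).filter
      (fun p => p.2.1 = i)) = ∅ := by
  ext p
  rw [Finset.mem_filter, Finset.mem_filter]
  simp only [Finset.mem_univ, true_and, Finset.notMem_empty, iff_false]
  rintro ⟨⟨h1, h2, h3⟩, h4⟩
  exact h3 (h2.trans h4)

end Inst
end HamRec


/-- Recurrence for the number of Hamiltonian paths (as vertex sequences) of complete
`k`-partite graphs: if `m'` is obtained from `m` by increasing the `i`-th part by one and
`∑_{j ≠ ℓ} m'_j ≥ m'_ℓ - 1` for all `ℓ`, then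
`s_{m'} = s_m · (1 - m_i + ∑_{j ≠ i} m_j) + ∑_{j ≠ i, m_j ≥ 2} m_j (m_j - 1) s_{m - e_j}`. -/
theorem hamCount_recurrence (k : ℕ) (hk : 2 ≤ k) (m : Fin k → ℕ) (hm : ∀ j, 1 ≤ m j)
    (i : Fin k)
    (h : ∀ l : Fin k, Function.update m i (m i + 1) l - 1 ≤
        ∑ j ∈ Finset.univ.erase l, Function.update m i (m i + 1) j) :
    (hamCount (completeMultipartiteGraph
        fun j : Fin k => Fin (Function.update m i (m i + 1) j)) : ℤ) =
      (hamCount (completeMultipartiteGraph fun j : Fin k => Fin (m j)) : ℤ) *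
          (1 - (m i : ℤ) + ∑ j ∈ Finset.univ.erase i, (m j : ℤ)) +
        ∑ j ∈ (Finset.univ.erase i).filter (fun j => 2 ≤ m j),
          (m j : ℤ) * ((m j : ℤ) - 1) *
            (hamCount (completeMultipartiteGraph
              fun t : Fin k => Fin (Function.update m j (m j - 1) t)) : ℤ) := by

  classical
  have hmain := HamRec.main_count (Sigma.fst : (Σ t, Fin (m t)) → Fin k) i
  set G : Fin k → ℕ := fun j => hamCount (completeMultipartiteGraph
      fun t : Fin k => Fin (Function.update m j (m j - 1) t)) with hG
  have hterm : ∀ p ∈ (Finset.univ.filter (fun p : (Σ t, Fin (m t)) × (Σ t, Fin (m t)) =>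
      p.1 ≠ p.2 ∧ p.1.1 = p.2.1 ∧ p.1.1 ≠ i)),
      hamCount (HamRec.pg (fun v : {v : Σ t, Fin (m t) // v ≠ p.2} => v.1.1)) = G p.2.1 := by
    intro p _
    rw [HamRec.step_down m p.2, hG]
    exact (HamRec.hamCount_cmg _).symm
  rw [Finset.sum_congr rfl hterm] at hmain
  have hsum : ∑ p ∈ (Finset.univ.filter (fun p : (Σ t, Fin (m t)) × (Σ t, Fin (m t)) =>
      p.1 ≠ p.2 ∧ p.1.1 = p.2.1 ∧ p.1.1 ≠ i)), G p.2.1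
      = ∑ j ∈ Finset.univ.erase i, (m j * m j - m j) * G j := by
    rw [← Finset.sum_fiberwise_of_maps_to
      (g := fun p : (Σ t, Fin (m t)) × (Σ t, Fin (m t)) => p.2.1)
      (fun p _ => Finset.mem_univ _) (fun p => G p.2.1)]
    rw [← Finset.add_sum_erase _ _ (Finset.mem_univ i), HamRec.card_Ai m i,
      Finset.sum_empty, zero_add]
    refine Finset.sum_congr rfl (fun j hj => ?_)
    have hji : j ≠ i := (Finset.mem_erase.1 hj).1
    have hcon : ∀ p ∈ (Finset.univ.filter (fun p : (Σ t, Fin (m t)) × (Σ t, Fin (m t)) =>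
        p.1 ≠ p.2 ∧ p.1.1 = p.2.1 ∧ p.1.1 ≠ i)).filter (fun p => p.2.1 = j),
        G p.2.1 = G j := fun p hp => by rw [(Finset.mem_filter.1 hp).2]
    rw [Finset.sum_congr rfl hcon, Finset.sum_const, HamRec.card_Aj m i j hji, smul_eq_mul]
  rw [hsum] at hmain
  have h1 : hamCount (HamRec.pg (HamRec.fo (Sigma.fst : (Σ t, Fin (m t)) → Fin k) i))
      = hamCount (completeMultipartiteGraph
        fun j : Fin k => Fin (Function.update m i (m i + 1) j)) :=
    (HamRec.step_up m i).trans (HamRec.hamCount_cmg _).symm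
  have h2 : hamCount (HamRec.pg (Sigma.fst : (Σ t, Fin (m t)) → Fin k))
      = hamCount (completeMultipartiteGraph fun j : Fin k => Fin (m j)) :=
    (HamRec.hamCount_cmg m).symm
  have h3 : (Finset.univ.filter (fun v : Σ t, Fin (m t) => v.1 = i)).card = m i :=
    HamRec.card_part m i
  have h4 : Fintype.card (Σ t, Fin (m t)) = ∑ t, m t := by simp
  rw [h1, h2, h3, h4] at hmain
  have hcast := congrArg (Nat.cast : ℕ → ℤ) hmain
  push_cast at hcast
  have hfix : ∀ j ∈ Finset.univ.erase i,
      (((m j * m j - m j : ℕ) : ℤ)) * (G j : ℤ)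
        = (m j : ℤ) * ((m j : ℤ) - 1) * (G j : ℤ) := by
    intro j _
    have h5 : m j ≤ m j * m j := Nat.le_mul_of_pos_left _ (hm j)
    rw [Nat.cast_sub h5]
    push_cast
    ring
  rw [Finset.sum_congr rfl hfix] at hcast
  have hfil : ∑ j ∈ (Finset.univ.erase i).filter (fun j => 2 ≤ m j),
      (m j : ℤ) * ((m j : ℤ) - 1) * (G j : ℤ)
      = ∑ j ∈ Finset.univ.erase i, (m j : ℤ) * ((m j : ℤ) - 1) * (G j : ℤ) := by
    refine Finset.sum_filter_of_ne (fun x hx h0 => ?_)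
    by_contra hlt
    have hmx := hm x
    have hx1 : m x = 1 := by omega
    apply h0
    rw [hx1]
    push_cast
    ring
  rw [← hfil] at hcast
  have hsplit : (∑ t, (m t : ℤ)) = (m i : ℤ) + ∑ t ∈ Finset.univ.erase i, (m t : ℤ) :=
    (Finset.add_sum_erase _ _ (Finset.mem_univ i)).symm
  rw [hsplit] at hcast
  linear_combination hcast
end

section
/- Let k ≥ 2 and m = (m_1, …, m_k) with every m_i ≥ 1, and suppose that for every i ∈ {1, …, k} one has ∑_{j ≠ i} m_j ≥ m_i − 1. Let G'_m be the graph obtained from the complete k-partite graph G_m with part sizes m by adding a new vertex u adjacent to every vertex of G_m. Then G'_m has a Hamiltonian cycle. -/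
open SimpleGraph

/-- The cone over a graph `G`: a new vertex (`none`) is added and joined to every vertex
of `G`; the old vertices keep their adjacency. -/
def cone {V : Type*} (G : SimpleGraph V) : SimpleGraph (Option V) where
  Adj a b := a ≠ b ∧ ∀ u v : V, a = some u → b = some v → G.Adj u v
  symm := ⟨fun a b ⟨hne, h⟩ => ⟨hne.symm, fun u v hb ha => (h v u ha hb).symm⟩⟩
  loopless := ⟨fun _ h => h.1 rfl⟩

section Helpers

variable {V : Type*} {H : SimpleGraph V}

/-- Build a walk from a chain of adjacencies. -/
def walkOfChain (b : V) : (L : List V) → (a : V) → List.Chain H.Adj a (L ++ [b]) → H.Walk a b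
  | [], a, h => SimpleGraph.Walk.cons (List.isChain_pair.mp h) SimpleGraph.Walk.nil
  | c :: L, a, h =>
      SimpleGraph.Walk.cons (List.isChain_cons_cons.mp h).1 (walkOfChain b L c (List.isChain_cons_cons.mp h).2)

lemma support_walkOfChain (b : V) : ∀ (L : List V) (a : V) (h),
    (walkOfChain (H := H) b L a h).support = a :: (L ++ [b])
  | [], a, h => by simp [walkOfChain]
  | c :: L, a, h => by
      simp [walkOfChain]; exact support_walkOfChain b L c _

lemma none_mem_edge_walkOfChain {W : Type*} {H : SimpleGraph (Option W)} (v₀ : W) :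
    ∀ (M : List W) (c : W) (h),
      s((none : Option W), some v₀) ∈ (walkOfChain (H := H) none (M.map some) (some c) h).edges →
      v₀ = (c :: M).getLast (List.cons_ne_nil c M)
  | [], c, h => by
      intro hmem
      simp only [List.map_nil, walkOfChain, SimpleGraph.Walk.edges_cons,
        SimpleGraph.Walk.edges_nil, List.mem_singleton] at hmem
      rw [Sym2.eq_iff] at hmem
      rcases hmem with ⟨h1, _⟩ | ⟨_, h2⟩
      · exact absurd h1 (by simp)
      · simpa [eq_comm] using h2
  | d :: M, c, h => by
      intro hmem
      simp only [List.map_cons, walkOfChain, SimpleGraph.Walk.edges_cons, List.mem_cons] at hmem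
      rcases hmem with heq | hmem
      · rw [Sym2.eq_iff] at heq
        rcases heq with ⟨h1, _⟩ | ⟨h1, _⟩ <;> exact absurd h1 (by simp)
      · have := none_mem_edge_walkOfChain v₀ M d _ hmem
        rw [List.getLast_cons (List.cons_ne_nil d M)]
        exact this

end Helpers

open Finset in
/-- Key combinatorial lemma: arranging elements so that consecutive ones have
different labels, with the first label avoiding a prescribed "small" label. -/
lemma exists_chain_list {α : Type*} [DecidableEq α] {k : ℕ} (hk : 2 ≤ k) (ℓ : α → Fin k) :
    ∀ (n : ℕ) (S : Finset α), S.card = n → S.Nonempty → ∀ i₀ : Fin k,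
    (∀ j, j ≠ i₀ → 2 * (S.filter fun v => ℓ v = j).card ≤ S.card + 1) →
    2 * (S.filter fun v => ℓ v = i₀).card ≤ S.card →
    ∃ L : List α, L.Nodup ∧ L.toFinset = S ∧ L.Chain' (fun a b => ℓ a ≠ ℓ b) ∧
      ∃ x, L.head? = some x ∧ ℓ x ≠ i₀ := by
  intro n
  induction n with
  | zero =>
      intro S hcard hne
      exact absurd (Finset.card_pos.mpr hne) (by omega)
  | succ n ih =>
      intro S hcard hne i₀ hcond hi₀
      -- the set of elements with label ≠ i₀ is nonempty
      have hsplit := Finset.card_filter_add_card_filter_not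
        (s := S) (p := fun v => ℓ v = i₀)
      have hne' : (S.filter fun v => ¬ ℓ v = i₀).Nonempty := by
        rw [← Finset.card_pos]
        omega
      obtain ⟨w, hw⟩ := hne'
      rw [Finset.mem_filter] at hw
      -- choose i with maximal count among labels ≠ i₀
      have hkerase : (Finset.univ.erase i₀).Nonempty := by
        rw [← Finset.card_pos, Finset.card_erase_of_mem (Finset.mem_univ _)]
        simp only [Finset.card_univ, Fintype.card_fin]
        omega
      obtain ⟨i, hi_mem, hi_max⟩ := Finset.exists_max_image (Finset.univ.erase i₀)
        (fun j => (S.filter fun v => ℓ v = j).card) hkerase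
      have hii₀ : i ≠ i₀ := Finset.ne_of_mem_erase hi_mem
      -- the i-part is nonempty
      have hw_mem : w ∈ S.filter fun v => ℓ v = ℓ w := by
        rw [Finset.mem_filter]; exact ⟨hw.1, rfl⟩
      have hci_pos : 0 < (S.filter fun v => ℓ v = i).card := by
        have h1 : 0 < (S.filter fun v => ℓ v = ℓ w).card :=
          Finset.card_pos.mpr ⟨w, hw_mem⟩
        have h2 := hi_max (ℓ w) (Finset.mem_erase.mpr ⟨hw.2, Finset.mem_univ _⟩)
        omega
      obtain ⟨v, hv⟩ := Finset.card_pos.mp hci_pos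
      rw [Finset.mem_filter] at hv
      -- pairwise disjointness of fibers
      have hpair : ∀ j j' : Fin k, j ≠ j' →
          (S.filter fun v => ℓ v = j).card + (S.filter fun v => ℓ v = j').card ≤ S.card := by
        intro j j' hjj'
        rw [← Finset.card_union_of_disjoint (by
          simp only [Finset.disjoint_filter]
          intro x _ hx hx'
          exact hjj' (hx ▸ hx'.symm ▸ rfl))]
        exact Finset.card_le_card (Finset.union_subset (Finset.filter_subset _ _)
          (Finset.filter_subset _ _))
      set S' := S.erase v with hS'
      have hcard' : S'.card = n := by
        rw [hS', Finset.card_erase_of_mem hv.1, hcard]; omega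
      by_cases hn0 : n = 0
      · -- the singleton case
        refine ⟨[v], by simp, ?_, List.isChain_singleton v, v, rfl, hv.2 ▸ hii₀⟩
        have : ({v} : Finset α) = S :=
          Finset.eq_of_subset_of_card_le (by simpa using hv.1) (by rw [hcard]; simp; omega)
        simpa using this
      · -- inductive step
        have hfe : ∀ j, j ≠ i → (S'.filter fun v => ℓ v = j) = S.filter fun v => ℓ v = j := by
          intro j hj
          rw [hS', Finset.filter_erase, Finset.erase_eq_of_notMem]
          rw [Finset.mem_filter]
          rintro ⟨-, h2⟩
          exact hj (hv.2 ▸ h2 ▸ rfl)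
        have hfi : (S'.filter fun v => ℓ v = i).card = (S.filter fun v => ℓ v = i).card - 1 := by
          rw [hS', Finset.filter_erase, Finset.card_erase_of_mem (Finset.mem_filter.mpr hv)]
        obtain ⟨L', hnodup', htoF', hchain', x, hx, hℓx⟩ :=
          ih S' hcard' (by rw [← Finset.card_pos, hcard']; omega) i
            (by
              intro j hj
              rw [hfe j hj, hcard']
              by_cases hji₀ : j = i₀
              · subst hji₀; omega
              · have h1 := hi_max j (Finset.mem_erase.mpr ⟨hji₀, Finset.mem_univ _⟩)
                have h2 := hpair j i (by exact hj)
                omega)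
            (by
              rw [hfi, hcard']
              have h1 := hcond i hii₀
              omega)
        refine ⟨v :: L', ?_, ?_, ?_, v, rfl, hv.2 ▸ hii₀⟩
        · rw [List.nodup_cons]
          refine ⟨fun hmem => ?_, hnodup'⟩
          rw [← List.mem_toFinset, htoF', hS'] at hmem
          exact (Finset.ne_of_mem_erase hmem) rfl
        · rw [List.toFinset_cons, htoF', hS', Finset.insert_erase hv.1]
        · rw [List.Chain', List.isChain_cons]
          refine ⟨fun y hy => ?_, hchain'⟩
          rw [hx, Option.mem_some_iff] at hy
          subst hy
          rw [hv.2]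
          exact fun hc => hℓx hc.symm

/-- If every part of a complete `k`-partite graph with part sizes `m` satisfies
`∑_{j ≠ i} m j ≥ m i - 1`, then the cone over it has a Hamiltonian cycle. -/
theorem cone_completeMultipartite_hamiltonianCycle (k : ℕ) (hk : 2 ≤ k) (m : Fin k → ℕ)
    (hm : ∀ i, 1 ≤ m i) (h : ∀ i : Fin k, m i - 1 ≤ ∑ j ∈ Finset.univ.erase i, m j) :
    ∃ (a : Option (Σ i : Fin k, Fin (m i)))
      (p : (cone (completeMultipartiteGraph fun i : Fin k => Fin (m i))).Walk a a),
        p.IsHamiltonianCycle := by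
  set V := (Σ i : Fin k, Fin (m i)) with hV
  set G := completeMultipartiteGraph fun i : Fin k => Fin (m i) with hG
  set n := ∑ j, m j with hn
  -- fiber cardinalities
  have hfiber : ∀ j : Fin k, ((Finset.univ : Finset V).filter fun v => v.1 = j).card = m j := by
    intro j
    have : ((Finset.univ : Finset V).filter fun v => v.1 = j)
        = ({j} : Finset (Fin k)).sigma (fun i => (Finset.univ : Finset (Fin (m i)))) := by
      ext ⟨i, x⟩
      rw [Finset.mem_filter, Finset.mem_sigma, Finset.mem_singleton]
      simp [eq_comm]
    rw [this, Finset.card_sigma]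
    simp
  have hcardV : (Finset.univ : Finset V).card = n := by
    rw [Finset.card_univ]
    simp [hV, hn]
  have h2 : ∀ j, 2 * m j ≤ n + 1 := by
    intro j
    have h1 := h j
    have h2 := Finset.sum_erase_add Finset.univ m (Finset.mem_univ j)
    have h3 := hm j
    rw [← hn] at h2
    omega
  -- choose the minimal part i₀
  obtain ⟨i₀, -, hmin⟩ := Finset.exists_min_image (Finset.univ : Finset (Fin k)) m
    ⟨⟨0, by omega⟩, Finset.mem_univ _⟩
  obtain ⟨j₁, hj₁⟩ := Fintype.exists_ne_of_one_lt_card (by simp; omega) i₀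
  have hmj₁ : m j₁ ≤ ∑ j' ∈ Finset.univ.erase i₀, m j' :=
    Finset.single_le_sum (fun _ _ => Nat.zero_le _)
      (Finset.mem_erase.mpr ⟨hj₁, Finset.mem_univ _⟩)
  have hsum_erase := Finset.sum_erase_add Finset.univ m (Finset.mem_univ i₀)
  rw [← hn] at hsum_erase
  have hi₀n : 2 * m i₀ ≤ n := by
    have := hmin j₁ (Finset.mem_univ _)
    omega
  have hn2 : 2 ≤ n := by
    have h1 := hm i₀
    have h2 := hm j₁
    have := hmin j₁ (Finset.mem_univ _)
    omega
  -- apply the key combinatorial lemma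
  have hVne : (Finset.univ : Finset V).Nonempty :=
    ⟨⟨i₀, ⟨0, hm i₀⟩⟩, Finset.mem_univ _⟩
  obtain ⟨L, hnodup, htoF, hchain, x₀, hx₀, -⟩ :=
    exists_chain_list hk (Sigma.fst : V → Fin k) (Finset.univ : Finset V).card
      Finset.univ rfl hVne i₀
      (fun j _ => by rw [hfiber j, hcardV]; exact h2 j)
      (by rw [hfiber i₀, hcardV]; exact hi₀n)
  have hmemL : ∀ v : V, v ∈ L := fun v => by
    rw [← List.mem_toFinset, htoF]; exact Finset.mem_univ _
  -- adjacency facts in the cone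
  have adj_ns : ∀ w : V, (cone G).Adj none (some w) :=
    fun w => ⟨by simp, fun u v h1 _ => by simp at h1⟩
  have adj_sn : ∀ w : V, (cone G).Adj (some w) none :=
    fun w => ⟨by simp, fun u v _ h2 => by simp at h2⟩
  have adj_ss : ∀ w w' : V, w.1 ≠ w'.1 → (cone G).Adj (some w) (some w') := by
    intro w w' hne
    refine ⟨fun hc => hne (congrArg Sigma.fst (Option.some.inj hc)), fun u v hu hv => ?_⟩
    cases Option.some.inj hu
    cases Option.some.inj hv
    exact hne
  -- destructure L
  obtain ⟨v₀, r, rfl⟩ : ∃ v₀ r, L = v₀ :: r := by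
    cases L with
    | nil => exact absurd (hmemL ⟨i₀, ⟨0, hm i₀⟩⟩) (by simp)
    | cons a l => exact ⟨a, l, rfl⟩
  have hrne : r ≠ [] := by
    intro hr
    have h1 := hmemL ⟨i₀, ⟨0, hm i₀⟩⟩
    have h2 := hmemL ⟨j₁, ⟨0, hm j₁⟩⟩
    rw [hr] at h1 h2
    simp only [List.mem_singleton] at h1 h2
    rw [← h2] at h1
    exact hj₁ (congrArg Sigma.fst h1).symm
  -- build the chain of adjacencies
  have hchain_cone : ∀ (M : List V) (c : V), List.Chain' (fun a b : V => a.1 ≠ b.1) (c :: M) →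
      List.Chain (cone G).Adj (some c) (M.map some ++ [none]) := by
    intro M
    induction M with
    | nil => intro c _; exact List.isChain_pair.mpr (adj_sn c)
    | cons d M ihM =>
        intro c hc
        simp only [List.Chain', List.isChain_cons_cons] at hc
        exact List.Chain.cons (adj_ss c d hc.1) (ihM d hc.2)
  have hch : List.Chain (cone G).Adj (some v₀) (r.map some ++ [none]) :=
    hchain_cone r v₀ hchain
  set q := walkOfChain (H := cone G) none (r.map some) (some v₀) hch with hq
  set p := SimpleGraph.Walk.cons (adj_ns v₀) q with hp
  refine ⟨none, p, ?_⟩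
  have hsupq : q.support = some v₀ :: (r.map some ++ [none]) := support_walkOfChain _ _ _ _
  have hnodup_r : v₀ ∉ r ∧ r.Nodup := List.nodup_cons.mp hnodup
  rw [SimpleGraph.Walk.isHamiltonianCycle_isCycle_and_isHamiltonian_tail]
  constructor
  · rw [hp, SimpleGraph.Walk.cons_isCycle_iff]
    constructor
    · apply SimpleGraph.Walk.IsPath.mk'
      rw [hsupq]
      rw [List.nodup_cons, List.nodup_append]
      refine ⟨by simp [hnodup_r.1], List.Nodup.map (Option.some_injective _) hnodup_r.2,
        by simp, by simp; rintro a x y - rfl; exact Option.some_ne_none _⟩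
    · intro hmem
      have := none_mem_edge_walkOfChain v₀ r v₀ hch hmem
      rw [List.getLast_cons hrne] at this
      exact hnodup_r.1 (this ▸ List.getLast_mem hrne)
  · have hnn : ¬ p.Nil := SimpleGraph.Walk.not_nil_cons
    have hsupt : p.tail.support = some v₀ :: (r.map some ++ [none]) := by
      rw [SimpleGraph.Walk.support_tail_of_not_nil p hnn, hp, SimpleGraph.Walk.support_cons,
        List.tail_cons, hsupq]
    apply SimpleGraph.Walk.IsPath.isHamiltonian_of_mem
    · apply SimpleGraph.Walk.IsPath.mk'
      rw [hsupt, List.nodup_cons, List.nodup_append]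
      refine ⟨by simp [hnodup_r.1], List.Nodup.map (Option.some_injective _) hnodup_r.2,
        by simp, by simp; rintro a x y - rfl; exact Option.some_ne_none _⟩
    · intro w
      rw [hsupt]
      cases w with
      | none => simp
      | some w =>
          rcases List.mem_cons.mp (hmemL w) with h' | h'
          · rw [h']; exact List.mem_cons_self
          · exact List.mem_cons_of_mem _
              (List.mem_append_left _ (List.mem_map_of_mem (f := some) h'))
end

section
/- Let k ≥ 2 and let G_n be the complete k-partite graph with vertex set V = V_1 ∪ … ∪ V_k, |V_i| = n_i, where n_i ≥ 2 for some fixed index i. Let u, v be two distinct vertices of V_i and let G' be the graph obtained from G_n by adding the edge {u,v}. Then the number of acyclic orientations of G' equals the number of acyclic orientations of G_n plus the number of acyclic orientations of the complete k-partite graph G_{n − e_i} whose part sizes agree with n except that the i-th part has size n_i − 1. -/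
open SimpleGraph

namespace AcyclicOrientation

open Relation

attribute [local instance] Classical.propDecidable

variable {V : Type*} {G : SimpleGraph V}

lemma ext {σ τ : AcyclicOrientation G} (h : σ.dir = τ.dir) : σ = τ := by
  cases σ; cases τ; simpa using h

lemma not_dir_self (σ : AcyclicOrientation G) (x : V) : ¬ σ.dir x x :=
  fun h => G.loopless.irrefl x (σ.dir_adj x x h)

lemma asymm (σ : AcyclicOrientation G) {x y : V} (h : σ.dir x y) : ¬ σ.dir y x :=
  fun h' => σ.acyclic x (TransGen.tail (TransGen.single h) h')

instance [Finite V] : Finite (AcyclicOrientation G) :=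
  Finite.of_injective (fun σ => σ.dir) (fun _ _ h => ext h)

/-- Restriction of an acyclic orientation of `G ⊔ {uv}` to `G`. -/
def restrict {u v : V} (σ : AcyclicOrientation (G ⊔ fromEdgeSet {s(u,v)})) :
    AcyclicOrientation G where
  dir x y := σ.dir x y ∧ G.Adj x y
  dir_adj x y h := h.2
  total x y h := by
    have h2 := σ.total x y (Or.inl h)
    simp only [h, h.symm, and_true]
    exact h2
  acyclic z h := σ.acyclic z (TransGen.mono (fun x y hxy => hxy.1) _ _ h)

lemma transGen_or {r : V → V → Prop} {a b z w : V}
    (h : TransGen (fun x y => r x y ∨ (x = a ∧ y = b)) z w) :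
    TransGen r z w ∨ (ReflTransGen r z a ∧ ReflTransGen r b w) := by
  induction h with
  | single h =>
    rcases h with h | ⟨rfl, rfl⟩
    · exact Or.inl (TransGen.single h)
    · exact Or.inr ⟨ReflTransGen.refl, ReflTransGen.refl⟩
  | tail h1 h2 ih =>
    rcases h2 with h2 | ⟨rfl, rfl⟩
    · rcases ih with ih | ⟨ih1, ih2⟩
      · exact Or.inl (ih.tail h2)
      · exact Or.inr ⟨ih1, ih2.tail h2⟩
    · rcases ih with ih | ⟨ih1, ih2⟩
      · exact Or.inr ⟨ih.to_reflTransGen, ReflTransGen.refl⟩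
      · exact Or.inr ⟨ih1, ReflTransGen.refl⟩

lemma not_adj_of_sym2_eq {a b u v : V} (hab : s(a,b) = s(u,v)) (h : ¬ G.Adj u v) :
    ¬ G.Adj a b := by
  rcases Sym2.eq_iff.mp hab with ⟨rfl, rfl⟩ | ⟨rfl, rfl⟩
  · exact h
  · exact fun h' => h h'.symm

/-- Extending an acyclic orientation of `G` by directing the new edge `a → b`. -/
def extend {u v : V} (hnadj : ¬ G.Adj u v) (ρ : AcyclicOrientation G) (a b : V)
    (hab : s(a,b) = s(u,v)) (hne : a ≠ b) (hnp : ¬ TransGen ρ.dir b a) :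
    AcyclicOrientation (G ⊔ fromEdgeSet {s(u,v)}) where
  dir x y := ρ.dir x y ∨ (x = a ∧ y = b)
  dir_adj x y h := by
    rcases h with h | ⟨rfl, rfl⟩
    · exact Or.inl (ρ.dir_adj _ _ h)
    · exact Or.inr ((fromEdgeSet_adj _).mpr ⟨by simp [hab], hne⟩)
  total x y h := by
    have hGab : ¬ G.Adj a b := not_adj_of_sym2_eq hab hnadj
    by_cases hA : G.Adj x y
    · have h2 := ρ.total x y hA
      have hxa : ¬(x = a ∧ y = b) := by rintro ⟨rfl, rfl⟩; exact hGab hA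
      have hya : ¬(y = a ∧ x = b) := by rintro ⟨rfl, rfl⟩; exact hGab hA.symm
      simp only [hxa, hya, or_false]
      exact h2
    · have hE : (fromEdgeSet {s(u,v)}).Adj x y := by
        rcases h with h | h
        · exact absurd h hA
        · exact h
      rw [fromEdgeSet_adj] at hE
      have hxy : s(x,y) = s(a,b) := (Set.mem_singleton_iff.mp hE.1).trans hab.symm
      have hρ1 : ¬ ρ.dir a b := fun hd => hGab (ρ.dir_adj _ _ hd)
      have hρ2 : ¬ ρ.dir b a := fun hd => hGab (ρ.dir_adj _ _ hd).symm
      rcases Sym2.eq_iff.mp hxy with ⟨rfl, rfl⟩ | ⟨rfl, rfl⟩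
      · simp [hρ1, hρ2, hne, Ne.symm hne]
      · simp [hρ1, hρ2, hne, Ne.symm hne]
  acyclic z h := by
    rcases transGen_or h with h | ⟨h1, h2⟩
    · exact ρ.acyclic z h
    · have hba : ReflTransGen ρ.dir b a := h2.trans h1
      rcases hba.cases_head with h3 | ⟨c, h3, h4⟩
      · exact hne h3.symm
      · exact hnp (TransGen.head' h3 h4)

lemma restrict_extend {u v : V} (hnadj : ¬ G.Adj u v) (ρ : AcyclicOrientation G) (a b : V)
    (hab : s(a,b) = s(u,v)) (hne : a ≠ b) (hnp : ¬ TransGen ρ.dir b a) :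
    restrict (extend hnadj ρ a b hab hne hnp) = ρ := by
  apply ext; funext x y; apply propext
  show (ρ.dir x y ∨ (x = a ∧ y = b)) ∧ G.Adj x y ↔ ρ.dir x y
  constructor
  · rintro ⟨h | ⟨rfl, rfl⟩, h2⟩
    · exact h
    · exact absurd h2 (not_adj_of_sym2_eq hab hnadj)
  · exact fun h => ⟨Or.inl h, ρ.dir_adj _ _ h⟩

lemma dir_iff {u v : V} (σ : AcyclicOrientation (G ⊔ fromEdgeSet {s(u,v)})) (x y : V) :
    σ.dir x y ↔ (restrict σ).dir x y ∨ (x = u ∧ y = v ∧ σ.dir u v) ∨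
      (x = v ∧ y = u ∧ σ.dir v u) := by
  constructor
  · intro h
    rcases σ.dir_adj x y h with hA | hE
    · exact Or.inl ⟨h, hA⟩
    · rw [fromEdgeSet_adj] at hE
      rcases Sym2.eq_iff.mp (Set.mem_singleton_iff.mp hE.1) with ⟨rfl, rfl⟩ | ⟨rfl, rfl⟩
      · exact Or.inr (Or.inl ⟨rfl, rfl, h⟩)
      · exact Or.inr (Or.inr ⟨rfl, rfl, h⟩)
  · rintro (⟨h, -⟩ | ⟨rfl, rfl, h⟩ | ⟨rfl, rfl, h⟩) <;> exact h

/-- The edge-addition bijection. -/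
noncomputable def edgeAddEquiv {u v : V} (hne : u ≠ v) (hnadj : ¬ G.Adj u v) :
    AcyclicOrientation (G ⊔ fromEdgeSet {s(u,v)}) ≃
      (AcyclicOrientation G ⊕
        {ρ : AcyclicOrientation G // ¬ TransGen ρ.dir u v ∧ ¬ TransGen ρ.dir v u}) where
  toFun σ :=
    if h : TransGen (restrict σ).dir u v ∨ TransGen (restrict σ).dir v u ∨ σ.dir u v
    then Sum.inl (restrict σ)
    else Sum.inr ⟨restrict σ, by push_neg at h; exact ⟨h.1, h.2.1⟩⟩
  invFun s :=
    match s with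
    | Sum.inl ρ =>
      if h : TransGen ρ.dir v u
      then extend hnadj ρ v u Sym2.eq_swap hne.symm
        (fun h' => ρ.acyclic u (h'.trans h))
      else extend hnadj ρ u v rfl hne h
    | Sum.inr ⟨ρ, h1, h2⟩ => extend hnadj ρ v u Sym2.eq_swap hne.symm h1
  left_inv := by
    intro σ
    have hA' : (G ⊔ fromEdgeSet {s(u,v)}).Adj u v :=
      Or.inr ((fromEdgeSet_adj _).mpr ⟨rfl, hne⟩)
    have htot := σ.total u v hA'
    dsimp only
    by_cases hc : TransGen (restrict σ).dir u v ∨ TransGen (restrict σ).dir v u ∨ σ.dir u v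
    · rw [dif_pos hc]
      dsimp only
      by_cases hvu : TransGen (restrict σ).dir v u
      · rw [dif_pos hvu]
        have hσvu : σ.dir v u := by
          by_contra hh
          have huv' : σ.dir u v := htot.mpr (by
            intro h5
            exact hh h5)
          exact σ.acyclic v ((TransGen.mono (fun _ _ hh => hh.1) _ _ hvu).tail huv')
        apply ext; funext x y; apply propext
        show (restrict σ).dir x y ∨ (x = v ∧ y = u) ↔ σ.dir x y
        rw [dir_iff σ x y]
        have hnuv : ¬ σ.dir u v := σ.asymm hσvu
        constructor
        · rintro (h | ⟨rfl, rfl⟩)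
          · exact Or.inl h
          · exact Or.inr (Or.inr ⟨rfl, rfl, hσvu⟩)
        · rintro (h | ⟨rfl, rfl, h⟩ | ⟨rfl, rfl, h⟩)
          · exact Or.inl h
          · exact absurd h hnuv
          · exact Or.inr ⟨rfl, rfl⟩
      · rw [dif_neg hvu]
        have hσuv : σ.dir u v := by
          rcases hc with hc | hc | hc
          · have : ¬ σ.dir v u := by
              intro h5
              exact σ.acyclic u ((TransGen.mono (fun _ _ hh => hh.1) _ _ hc).tail h5)
            exact htot.mpr this
          · exact absurd hc hvu
          · exact hc
        apply ext; funext x y; apply propext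
        show (restrict σ).dir x y ∨ (x = u ∧ y = v) ↔ σ.dir x y
        rw [dir_iff σ x y]
        have hnvu : ¬ σ.dir v u := fun h5 => (htot.mp hσuv) h5
        constructor
        · rintro (h | ⟨rfl, rfl⟩)
          · exact Or.inl h
          · exact Or.inr (Or.inl ⟨rfl, rfl, hσuv⟩)
        · rintro (h | ⟨rfl, rfl, h⟩ | ⟨rfl, rfl, h⟩)
          · exact Or.inl h
          · exact Or.inr ⟨rfl, rfl⟩
          · exact absurd h hnvu
    · rw [dif_neg hc]
      push_neg at hc
      show extend hnadj (restrict σ) v u _ _ _ = σ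
      have hσvu : σ.dir v u := by
        by_contra hh
        exact hc.2.2 (htot.mpr (by intro h5; exact hh h5))
      have hnuv : ¬ σ.dir u v := σ.asymm hσvu
      apply ext; funext x y; apply propext
      show (restrict σ).dir x y ∨ (x = v ∧ y = u) ↔ σ.dir x y
      rw [dir_iff σ x y]
      constructor
      · rintro (h | ⟨rfl, rfl⟩)
        · exact Or.inl h
        · exact Or.inr (Or.inr ⟨rfl, rfl, hσvu⟩)
      · rintro (h | ⟨rfl, rfl, h⟩ | ⟨rfl, rfl, h⟩)
        · exact Or.inl h
        · exact absurd h hnuv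
        · exact Or.inr ⟨rfl, rfl⟩
  right_inv := by
    rintro (ρ | ⟨ρ, h1, h2⟩) <;> dsimp only
    · by_cases hvu : TransGen ρ.dir v u
      · rw [dif_pos hvu]
        rw [dif_pos (by rw [restrict_extend]; exact Or.inr (Or.inl hvu))]
        rw [restrict_extend]
      · rw [dif_neg hvu]
        rw [dif_pos (by
          refine Or.inr (Or.inr ?_)
          show ρ.dir u v ∨ (u = u ∧ v = v)
          exact Or.inr ⟨rfl, rfl⟩)]
        rw [restrict_extend]
    · have hσ : ∀ x y, (extend hnadj ρ v u Sym2.eq_swap hne.symm h1).dir x y =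
          (ρ.dir x y ∨ (x = v ∧ y = u)) := fun x y => rfl
      rw [dif_neg (by
        rw [restrict_extend]
        push_neg
        refine ⟨h1, h2, ?_⟩
        rw [hσ]
        rintro (h | ⟨h3, h4⟩)
        · exact h1 (TransGen.single h)
        · exact hne h3)]
      congr 1
      exact Subtype.ext (restrict_extend hnadj ρ v u Sym2.eq_swap hne.symm h1)

lemma noPath_iff_twin {u v : V} (hnadj : ¬ G.Adj u v)
    (hNbr : ∀ w, G.Adj u w ↔ G.Adj v w) (ρ : AcyclicOrientation G) :
    (¬ TransGen ρ.dir u v ∧ ¬ TransGen ρ.dir v u) ↔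
      ∀ w, (ρ.dir u w ↔ ρ.dir v w) ∧ (ρ.dir w u ↔ ρ.dir w v) := by
  constructor
  · rintro ⟨h1, h2⟩ w
    have key1 : ∀ (a b : V), ¬ TransGen ρ.dir a b → (∀ z, G.Adj a z ↔ G.Adj b z) →
        ∀ z, ρ.dir a z → ρ.dir b z := by
      intro a b hab hN z h
      rcases eq_or_ne z b with rfl | hz
      · exact absurd (TransGen.single h) hab
      · have hAb : G.Adj b z := (hN z).mp (ρ.dir_adj _ _ h)
        by_contra hbz
        have hzb : ρ.dir z b := by
          have := ρ.total b z hAb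
          by_contra hzb
          exact hbz (this.mpr hzb)
        exact hab (TransGen.tail (TransGen.single h) hzb)
    have key2 : ∀ (a b : V), ¬ TransGen ρ.dir b a → (∀ z, G.Adj a z ↔ G.Adj b z) →
        ∀ z, ρ.dir z a → ρ.dir z b := by
      intro a b hba hN z h
      rcases eq_or_ne z b with rfl | hz
      · exact absurd (TransGen.single h) hba
      · have hAb : G.Adj b z := (hN z).mp (ρ.dir_adj _ _ h).symm
        by_contra hzb
        have hbz : ρ.dir b z := by
          have := ρ.total b z hAb
          by_contra hbz
          exact hzb ((ρ.total z b hAb.symm).mpr hbz)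
        exact hba (TransGen.tail (TransGen.single hbz) h)
    have hN' : ∀ z, G.Adj v z ↔ G.Adj u z := fun z => (hNbr z).symm
    exact ⟨⟨key1 u v h1 hNbr w, key1 v u h2 hN' w⟩,
      ⟨key2 u v h2 hNbr w, key2 v u h1 hN' w⟩⟩
  · intro htwin
    constructor
    · intro hp
      rcases TransGen.head'_iff.mp hp with ⟨c, hc1, hc2⟩
      exact ρ.acyclic v (TransGen.head' ((htwin c).1.mp hc1) hc2)
    · intro hp
      rcases TransGen.head'_iff.mp hp with ⟨c, hc1, hc2⟩
      exact ρ.acyclic u (TransGen.head' ((htwin c).1.mpr hc1) hc2)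

/-- Contraction bijection, transporting orientations along maps `f, g`. -/
noncomputable def contractEquiv {W : Type*} {H : SimpleGraph W} {u v : V} (hne : u ≠ v)
    (f : W → V) (g : V → W)
    (hgf : ∀ a, g (f a) = a) (hfg : ∀ x, x ≠ v → f (g x) = x) (hfgv : f (g v) = u)
    (hGH : ∀ x y, G.Adj x y ↔ H.Adj (g x) (g y)) :
    {ρ : AcyclicOrientation G // ∀ w, (ρ.dir u w ↔ ρ.dir v w) ∧ (ρ.dir w u ↔ ρ.dir w v)}
      ≃ AcyclicOrientation H where
  toFun ρ :=
    { dir := fun a b => ρ.1.dir (f a) (f b)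
      dir_adj := fun a b h => by
        have h2 := (hGH _ _).mp (ρ.1.dir_adj _ _ h)
        rwa [hgf, hgf] at h2
      total := fun a b h => ρ.1.total _ _ (by rw [hGH, hgf, hgf]; exact h)
      acyclic := fun a h => ρ.1.acyclic (f a) (TransGen.lift f (fun _ _ hh => hh) _ _ h) }
  invFun τ :=
    ⟨{ dir := fun x y => τ.dir (g x) (g y)
       dir_adj := fun x y h => (hGH x y).mpr (τ.dir_adj _ _ h)
       total := fun x y h => τ.total _ _ ((hGH x y).mp h)
       acyclic := fun x h => τ.acyclic (g x) (TransGen.lift g (fun _ _ hh => hh) _ _ h) },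
     fun w => by
       have hguv : g u = g v := by
         have hfi : Function.Injective f := Function.LeftInverse.injective hgf
         apply hfi
         rw [hfgv, hfg u hne]
       show (τ.dir (g u) (g w) ↔ τ.dir (g v) (g w)) ∧ (τ.dir (g w) (g u) ↔ τ.dir (g w) (g v))
       rw [hguv]
       exact ⟨Iff.rfl, Iff.rfl⟩⟩
  left_inv := by
    intro ρ
    apply Subtype.ext; apply ext; funext x y; apply propext
    show ρ.1.dir (f (g x)) (f (g y)) ↔ ρ.1.dir x y
    by_cases hx : x = v <;> by_cases hy : y = v
    · rw [hx, hy, hfgv]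
      exact iff_of_false (ρ.1.not_dir_self u) (ρ.1.not_dir_self v)
    · rw [hx, hfgv, hfg y hy]
      exact (ρ.2 y).1
    · rw [hy, hfg x hx, hfgv]
      exact (ρ.2 x).2
    · rw [hfg x hx, hfg y hy]
  right_inv := by
    intro τ
    apply ext; funext a b; apply propext
    show τ.dir (g (f a)) (g (f b)) ↔ τ.dir a b
    rw [hgf, hgf]

end AcyclicOrientation

section Main

open AcyclicOrientation Relation

lemma sigma_fin_ext {α : Type*} {nf : α → ℕ} {x y : Σ j, Fin (nf j)}
    (h1 : x.1 = y.1) (h2 : (x.2 : ℕ) = (y.2 : ℕ)) : x = y := by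
  obtain ⟨a, b⟩ := x
  obtain ⟨c, d⟩ := y
  dsimp at h1
  subst h1
  exact congrArg _ (Fin.ext h2)

lemma exists_maps (k : ℕ) (n : Fin k → ℕ) (i : Fin k) (hni : 2 ≤ n i)
    (u2 v2 : Fin (n i)) (hne2 : u2 ≠ v2) :
    ∃ (f : (Σ j, Fin (Function.update n i (n i - 1) j)) → (Σ j, Fin (n j)))
      (g : (Σ j, Fin (n j)) → (Σ j, Fin (Function.update n i (n i - 1) j))),
      (∀ a, (f a).1 = a.1) ∧ (∀ x, (g x).1 = x.1) ∧
      (∀ a, g (f a) = a) ∧ (∀ x, x ≠ ⟨i, v2⟩ → f (g x) = x) ∧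
      f (g ⟨i, v2⟩) = ⟨i, u2⟩ := by
  classical
  have hm1 : n i - 1 + 1 = n i := by omega
  haveI : Nonempty (Fin (n i - 1)) := ⟨⟨0, by omega⟩⟩
  set pv : Fin (n i - 1 + 1) := Fin.cast hm1.symm v2 with hpv
  set emb : Fin (n i - 1) → Fin (n i) := fun a => Fin.cast hm1 (pv.succAbove a) with hemb
  have embinj : Function.Injective emb := fun a b h =>
    Fin.succAbove_right_injective (p := pv) (Fin.cast_injective hm1 h)
  have emb_ne : ∀ a, emb a ≠ v2 := by
    intro a h
    apply Fin.succAbove_ne pv a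
    apply Fin.ext
    have h2 : (pv.succAbove a).val = v2.val := by
      have := congrArg Fin.val h
      simpa [hemb] using this
    rw [h2, hpv]
    simp
  have emb_surj : ∀ x : Fin (n i), x ≠ v2 → ∃ a, emb a = x := by
    intro x hx
    have hxp : Fin.cast hm1.symm x ≠ pv := by
      intro h
      refine hx (Fin.ext ?_)
      have := congrArg Fin.val h
      simpa [hpv] using this
    obtain ⟨a, ha⟩ := Fin.exists_succAbove_eq hxp
    refine ⟨a, ?_⟩
    rw [hemb]
    dsimp only
    rw [ha]
    apply Fin.ext
    simp
  set gi : Fin (n i) → Fin (n i - 1) :=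
    fun x => Function.invFun emb (if x = v2 then u2 else x) with hgi
  have gi_emb : ∀ a, gi (emb a) = a := by
    intro a
    rw [hgi]
    dsimp only
    rw [if_neg (emb_ne a)]
    exact Function.leftInverse_invFun embinj a
  have emb_gi : ∀ x, x ≠ v2 → emb (gi x) = x := by
    intro x hx
    rw [hgi]
    dsimp only
    rw [if_neg hx]
    exact Function.invFun_eq (emb_surj x hx)
  have emb_gi_v : emb (gi v2) = u2 := by
    rw [hgi]
    dsimp only
    rw [if_pos rfl]
    exact Function.invFun_eq (emb_surj u2 hne2)
  refine ⟨fun a => if h : a.1 = i then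
      ⟨i, emb (Fin.cast (by rw [h, Function.update_self]) a.2)⟩
    else ⟨a.1, Fin.cast (Function.update_of_ne h _ _) a.2⟩,
    fun x => if h : x.1 = i then
      ⟨i, Fin.cast (Function.update_self i (n i - 1) n).symm (gi (Fin.cast (by rw [h]) x.2))⟩
    else ⟨x.1, Fin.cast (Function.update_of_ne h _ _).symm x.2⟩, ?_, ?_, ?_, ?_, ?_⟩
  · rintro ⟨j, b⟩
    dsimp only
    by_cases h : j = i
    · rw [dif_pos h]; exact h.symm
    · rw [dif_neg h]
  · rintro ⟨j, b⟩
    dsimp only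
    by_cases h : j = i
    · rw [dif_pos h]; exact h.symm
    · rw [dif_neg h]
  · rintro ⟨j, b⟩
    dsimp only
    by_cases h : j = i
    · rw [dif_pos h]
      dsimp only
      rw [dif_pos rfl]
      refine sigma_fin_ext h.symm ?_
      exact congrArg Fin.val (gi_emb _)
    · rw [dif_neg h]
      dsimp only
      rw [dif_neg h]
      exact sigma_fin_ext rfl rfl
  · rintro ⟨j, b⟩
    intro hx
    dsimp only
    by_cases h : j = i
    · rw [dif_pos h]
      dsimp only
      rw [dif_pos rfl]
      subst h
      have hb : b ≠ v2 := fun hh => hx (by rw [hh])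
      refine sigma_fin_ext rfl ?_
      exact congrArg Fin.val (emb_gi b hb)
    · rw [dif_neg h]
      dsimp only
      rw [dif_neg h]
      exact sigma_fin_ext rfl rfl
  · dsimp only
    rw [dif_pos rfl]
    dsimp only
    rw [dif_pos rfl]
    refine sigma_fin_ext rfl ?_
    exact congrArg Fin.val emb_gi_v

end Main

/-- Adding to a complete `k`-partite graph one edge `{u, v}` inside the `i`-th part yields a
graph whose number of acyclic orientations is the number of acyclic orientations of the
complete `k`-partite graph plus the number of acyclic orientations of the complete
`k`-partite graph in which the `i`-th part has one fewer vertex. -/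
theorem ao_add_edge (k : ℕ) (hk : 2 ≤ k) (n : Fin k → ℕ) (hn : ∀ j, 1 ≤ n j) (i : Fin k)
    (hni : 2 ≤ n i) (u v : Σ j : Fin k, Fin (n j)) (hu : u.1 = i) (hv : v.1 = i)
    (huv : u ≠ v) :
    Nat.card (AcyclicOrientation
        ((completeMultipartiteGraph fun j : Fin k => Fin (n j)) ⊔
          SimpleGraph.fromEdgeSet {s(u, v)})) =
      Nat.card (AcyclicOrientation (completeMultipartiteGraph fun j : Fin k => Fin (n j))) +
        Nat.card (AcyclicOrientation (completeMultipartiteGraph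
          fun j : Fin k => Fin (Function.update n i (n i - 1) j))) := by
  obtain ⟨u1, u2⟩ := u
  obtain ⟨v1, v2⟩ := v
  dsimp only at hu hv
  have hu' := hu.symm
  subst hu'
  have hv' := hv.symm
  subst hv'
  have hne2 : u2 ≠ v2 := by
    intro h
    apply huv
    rw [h]
  obtain ⟨f, g, hf1, hg1, hgf, hfg, hfgv⟩ := exists_maps k n i hni u2 v2 hne2
  have hnadj : ¬ (completeMultipartiteGraph fun j : Fin k => Fin (n j)).Adj ⟨i, u2⟩ ⟨i, v2⟩ :=
    fun h => h rfl
  have hNbr : ∀ w, (completeMultipartiteGraph fun j : Fin k => Fin (n j)).Adj ⟨i, u2⟩ w ↔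
      (completeMultipartiteGraph fun j : Fin k => Fin (n j)).Adj ⟨i, v2⟩ w := fun w => Iff.rfl
  have hGH : ∀ x y : Σ j, Fin (n j),
      (completeMultipartiteGraph fun j : Fin k => Fin (n j)).Adj x y ↔
      (completeMultipartiteGraph
        fun j : Fin k => Fin (Function.update n i (n i - 1) j)).Adj (g x) (g y) := by
    intro x y
    show x.1 ≠ y.1 ↔ (g x).1 ≠ (g y).1
    rw [hg1 x, hg1 y]
  rw [Nat.card_congr (AcyclicOrientation.edgeAddEquiv huv hnadj), Nat.card_sum]
  congr 1
  exact Nat.card_congr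
    ((Equiv.subtypeEquivRight
        (fun ρ => AcyclicOrientation.noPath_iff_twin hnadj hNbr ρ)).trans
      (AcyclicOrientation.contractEquiv huv f g hgf hfg hfgv hGH))
end
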